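/- arXiv:1707.08634 — 7 statements merged into one kernel-verified Lean document; each statement's English description precedes it below -/
import Mathlib

section
/- Let {n_k}_{k≥1} be a sequence of positive integers and let 𝒥 = {J_σ : σ ∈ D} be a collection of nonempty compact subsets of ℝ^N such that diam(J_σ) > 0 for every σ, J_{σ*j} ⊆ J_σ for every σ and j, and for each k ≥ 1 and each σ ∈ D_{k−1} the sets J_{σ*1}, ..., J_{σ*n_k} are pairwise disjoint. Suppose for some s > 0 that Σ_{j=1}^{n_k} diam(J_{σ*j})^s ≥ diam(J_σ)^s for every k ≥ 1 and every σ ∈ D_{k−1}. Then there exists a Borel probability measure μ on ℝ^N with μ(F) = 1, where F = ⋂_{k≥0} ⋃_{σ∈D_k} J_σ, such that μ(J_σ) ≤ (diam(J_σ)/diam(J_∅))^s for every word σ ∈ D. -/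
/-!
Split the unit mass down the tree of words, giving each child `σ*j` a share of the mass of `σ`
proportional to `diam(J_{σ*j})^s`. Since `Σ_j diam(J_{σ*j})^s ≥ diam(J_σ)^s`, induction gives
mass at most `(diam J_σ / diam J_∅)^s` to `σ`. Placing the masses of level `j` as atoms at points
of the sets `J_σ` gives probability measures `ν_j`; their limit along an ultrafilter on compact
sets is a content, whose measure gives full mass to each level union `⋃_{σ ∈ D_k} J_σ`, hence
to `F`, and, the sets of one level being disjoint and compact, at most the mass of `σ` to `J_σ`.
No shrinking of the diameters is needed.
-/

/-- `Dk n k` is the set of words `(i_1, ..., i_k)` with `1 ≤ i_j ≤ n j` for each `j`. -/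
def Dk (n : ℕ → ℕ) : ℕ → Finset (List ℕ)
  | 0 => {[]}
  | k + 1 => ((Dk n k) ×ˢ (Finset.Icc 1 (n (k + 1)))).image fun p => p.1 ++ [p.2]

open Filter Topology Finset MeasureTheory
open scoped ENNReal

section Words

variable {n : ℕ → ℕ} {k : ℕ}

theorem mem_Dk_zero {σ : List ℕ} : σ ∈ Dk n 0 ↔ σ = [] := Finset.mem_singleton

theorem mem_Dk_succ {σ : List ℕ} :
    σ ∈ Dk n (k + 1) ↔ ∃ τ ∈ Dk n k, ∃ j ∈ Icc 1 (n (k + 1)), σ = τ ++ [j] := by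
  simp only [Dk, mem_image, mem_product, Prod.exists]
  constructor
  · rintro ⟨τ, j, ⟨hτ, hj⟩, rfl⟩; exact ⟨τ, hτ, j, hj, rfl⟩
  · rintro ⟨τ, hτ, j, hj, rfl⟩; exact ⟨τ, j, ⟨hτ, hj⟩, rfl⟩

theorem append_mem_Dk {σ : List ℕ} (hσ : σ ∈ Dk n k) {j : ℕ} (hj : j ∈ Icc 1 (n (k + 1))) :
    σ ++ [j] ∈ Dk n (k + 1) :=
  mem_Dk_succ.2 ⟨σ, hσ, j, hj, rfl⟩

theorem length_of_mem_Dk {σ : List ℕ} (hσ : σ ∈ Dk n k) : σ.length = k := by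
  induction k generalizing σ with
  | zero => simp [mem_Dk_zero.1 hσ]
  | succ k ih =>
    obtain ⟨τ, hτ, j, -, rfl⟩ := mem_Dk_succ.1 hσ
    simp [ih hτ]

theorem sum_Dk_succ {M : Type*} [AddCommMonoid M] (f : List ℕ → M) :
    ∑ σ ∈ Dk n (k + 1), f σ = ∑ τ ∈ Dk n k, ∑ j ∈ Icc 1 (n (k + 1)), f (τ ++ [j]) := by
  rw [Dk, sum_image, sum_product]
  rintro ⟨τ, i⟩ - ⟨ρ, j⟩ - h
  obtain ⟨rfl, h⟩ := List.append_inj' h rfl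
  simp_all

theorem take_mem_Dk {j : ℕ} (hkj : k ≤ j) {τ : List ℕ} (hτ : τ ∈ Dk n j) :
    τ.take k ∈ Dk n k := by
  induction j, hkj using Nat.le_induction generalizing τ with
  | base => rwa [List.take_of_length_le (length_of_mem_Dk hτ).le]
  | succ j hkj ih =>
    obtain ⟨ρ, hρ, i, -, rfl⟩ := mem_Dk_succ.1 hτ
    rw [List.take_append_of_le_length (by rw [length_of_mem_Dk hρ]; exact hkj)]
    exact ih hρ

section Sums

variable {M : Type*} [AddCommMonoid M] {m : List ℕ → M}

theorem sum_filter_take_eq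
    (hm : ∀ k, ∀ σ ∈ Dk n k, ∑ j ∈ Icc 1 (n (k + 1)), m (σ ++ [j]) = m σ)
    {σ : List ℕ} (hσ : σ ∈ Dk n k) {j : ℕ} (hkj : k ≤ j) :
    ∑ τ ∈ Dk n j with τ.take k = σ, m τ = m σ := by
  induction j, hkj using Nat.le_induction with
  | base =>
    rw [sum_filter]
    calc _ = ∑ τ ∈ Dk n k, if τ = σ then m τ else 0 :=
          sum_congr rfl fun τ hτ => by rw [List.take_of_length_le (length_of_mem_Dk hτ).le]
      _ = m σ := by rw [sum_ite_eq', if_pos hσ]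
  | succ j hkj ih =>
    rw [sum_filter, sum_Dk_succ, ← ih, sum_filter]
    refine sum_congr rfl fun ρ hρ => ?_
    have htake : ∀ i, (ρ ++ [i]).take k = ρ.take k := fun i =>
      List.take_append_of_le_length (by rw [length_of_mem_Dk hρ]; exact hkj)
    simp only [htake]
    split_ifs
    · exact hm j ρ hρ
    · exact sum_const_zero

theorem sum_Dk_eq_one [One M]
    (hm : ∀ k, ∀ σ ∈ Dk n k, ∑ j ∈ Icc 1 (n (k + 1)), m (σ ++ [j]) = m σ) (hnil : m [] = 1) :
    ∑ σ ∈ Dk n k, m σ = 1 := by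
  simpa [hnil] using sum_filter_take_eq hm (mem_Dk_zero.2 rfl) k.zero_le

end Sums

variable {X : Type*} {J : List ℕ → Set X}

theorem subset_take_of_mem_Dk
    (hsub : ∀ k, ∀ σ ∈ Dk n k, ∀ j ∈ Icc 1 (n (k + 1)), J (σ ++ [j]) ⊆ J σ)
    {j : ℕ} (hkj : k ≤ j) {τ : List ℕ} (hτ : τ ∈ Dk n j) : J τ ⊆ J (τ.take k) := by
  induction j, hkj using Nat.le_induction generalizing τ with
  | base => rw [List.take_of_length_le (length_of_mem_Dk hτ).le]
  | succ j hkj ih =>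
    obtain ⟨ρ, hρ, i, hi, rfl⟩ := mem_Dk_succ.1 hτ
    rw [List.take_append_of_le_length (by rw [length_of_mem_Dk hρ]; exact hkj)]
    exact (hsub j ρ hρ i hi).trans (ih hρ)

theorem disjoint_of_mem_Dk
    (hsub : ∀ k, ∀ σ ∈ Dk n k, ∀ j ∈ Icc 1 (n (k + 1)), J (σ ++ [j]) ⊆ J σ)
    (hdisj : ∀ k, ∀ σ ∈ Dk n k, ∀ i ∈ Icc 1 (n (k + 1)), ∀ j ∈ Icc 1 (n (k + 1)),
      i ≠ j → Disjoint (J (σ ++ [i])) (J (σ ++ [j])))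
    {σ τ : List ℕ} (hσ : σ ∈ Dk n k) (hτ : τ ∈ Dk n k) (hne : σ ≠ τ) :
    Disjoint (J σ) (J τ) := by
  induction k generalizing σ τ with
  | zero => exact absurd ((mem_Dk_zero.1 hσ).trans (mem_Dk_zero.1 hτ).symm) hne
  | succ k ih =>
    obtain ⟨ρ, hρ, i, hi, rfl⟩ := mem_Dk_succ.1 hσ
    obtain ⟨ρ', hρ', j, hj, rfl⟩ := mem_Dk_succ.1 hτ
    by_cases hρρ' : ρ = ρ'
    · subst hρρ'
      exact hdisj k ρ hρ i hi j hj fun hij => hne (by rw [hij])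
    · exact (ih hρ hρ' hρρ').mono (hsub k ρ hρ i hi) (hsub k ρ' hρ' j hj)

end Words

section MassDistribution

variable (n : ℕ → ℕ) (w : List ℕ → ℝ)

noncomputable def branchSum (σ : List ℕ) : ℝ :=
  ∑ j ∈ Icc 1 (n (σ.length + 1)), w (σ ++ [j])

/-- The mass of `σ` is split among its children in proportion to their weights `w`. -/
noncomputable def massDist (σ : List ℕ) : ℝ :=
  ∏ i ∈ range σ.length, w (σ.take (i + 1)) / branchSum n w (σ.take i)

@[simp]
theorem massDist_nil : massDist n w [] = 1 := by simp [massDist]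

theorem massDist_append (σ : List ℕ) (j : ℕ) :
    massDist n w (σ ++ [j]) = massDist n w σ * (w (σ ++ [j]) / branchSum n w σ) := by
  have htake : ∀ i ≤ σ.length, (σ ++ [j]).take i = σ.take i := fun i hi =>
    List.take_append_of_le_length hi
  rw [massDist, List.length_append, List.length_singleton, prod_range_succ,
    htake _ le_rfl, List.take_length, List.take_of_length_le (by simp), massDist]
  congr 1
  refine prod_congr rfl fun i hi => ?_
  rw [htake (i + 1) (mem_range.1 hi), htake i (mem_range.1 hi).le]

variable {n w} {k : ℕ}

theorem branchSum_of_mem_Dk {σ : List ℕ} (hσ : σ ∈ Dk n k) :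
    branchSum n w σ = ∑ j ∈ Icc 1 (n (k + 1)), w (σ ++ [j]) := by
  rw [branchSum, length_of_mem_Dk hσ]

theorem branchSum_pos (hw : ∀ k, ∀ σ ∈ Dk n k, 0 < w σ)
    (hsplit : ∀ k, ∀ σ ∈ Dk n k, w σ ≤ ∑ j ∈ Icc 1 (n (k + 1)), w (σ ++ [j]))
    {σ : List ℕ} (hσ : σ ∈ Dk n k) : 0 < branchSum n w σ :=
  (branchSum_of_mem_Dk hσ).symm ▸ (hw k σ hσ).trans_le (hsplit k σ hσ)

theorem massDist_pos (hw : ∀ k, ∀ σ ∈ Dk n k, 0 < w σ)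
    (hsplit : ∀ k, ∀ σ ∈ Dk n k, w σ ≤ ∑ j ∈ Icc 1 (n (k + 1)), w (σ ++ [j]))
    {σ : List ℕ} (hσ : σ ∈ Dk n k) : 0 < massDist n w σ := by
  induction k generalizing σ with
  | zero => simp [mem_Dk_zero.1 hσ]
  | succ k ih =>
    obtain ⟨τ, hτ, j, hj, rfl⟩ := mem_Dk_succ.1 hσ
    rw [massDist_append]
    exact mul_pos (ih hτ) (div_pos (hw _ _ hσ) (branchSum_pos hw hsplit hτ))

theorem sum_massDist_children (hbranch : ∀ k, ∀ σ ∈ Dk n k, branchSum n w σ ≠ 0)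
    {σ : List ℕ} (hσ : σ ∈ Dk n k) :
    ∑ j ∈ Icc 1 (n (k + 1)), massDist n w (σ ++ [j]) = massDist n w σ := by
  simp_rw [massDist_append, ← mul_sum, ← sum_div, ← branchSum_of_mem_Dk hσ,
    div_self (hbranch k σ hσ), mul_one]

theorem massDist_le_div (hw : ∀ k, ∀ σ ∈ Dk n k, 0 < w σ)
    (hsplit : ∀ k, ∀ σ ∈ Dk n k, w σ ≤ ∑ j ∈ Icc 1 (n (k + 1)), w (σ ++ [j]))
    {σ : List ℕ} (hσ : σ ∈ Dk n k) : massDist n w σ ≤ w σ / w [] := by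
  rw [le_div_iff₀ (hw 0 [] (mem_Dk_zero.2 rfl))]
  induction k generalizing σ with
  | zero => simp [mem_Dk_zero.1 hσ]
  | succ k ih =>
    obtain ⟨τ, hτ, j, hj, rfl⟩ := mem_Dk_succ.1 hσ
    have hS := branchSum_pos hw hsplit hτ
    have hfrac : 0 ≤ w (τ ++ [j]) / branchSum n w τ := (div_pos (hw _ _ hσ) hS).le
    calc massDist n w (τ ++ [j]) * w []
        = massDist n w τ * w [] * (w (τ ++ [j]) / branchSum n w τ) := by
          rw [massDist_append]; ring
      _ ≤ branchSum n w τ * (w (τ ++ [j]) / branchSum n w τ) := by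
          gcongr
          exact (ih hτ).trans (branchSum_of_mem_Dk hτ ▸ hsplit k τ hτ)
      _ = w (τ ++ [j]) := mul_div_cancel₀ _ hS.ne'

end MassDistribution

namespace Ultrafilter

variable {α β : Type*} [TopologicalSpace β] [CompactSpace β] [Nonempty β] (U : Ultrafilter α)

theorem tendsto_limUnder (f : α → β) : Tendsto f U (𝓝 (limUnder (↑U) f)) :=
  (U.map f).le_nhds_lim

theorem limUnder_mono [Preorder β] [OrderClosedTopology β] {f g : α → β} (h : ∀ a, f a ≤ g a) :
    limUnder (↑U) f ≤ limUnder (↑U) g :=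
  le_of_tendsto_of_tendsto' (U.tendsto_limUnder f) (U.tendsto_limUnder g) h

theorem limUnder_add [Add β] [ContinuousAdd β] [T2Space β] (f g : α → β) :
    limUnder (↑U) (fun a => f a + g a) = limUnder (↑U) f + limUnder (↑U) g :=
  ((U.tendsto_limUnder f).add (U.tendsto_limUnder g)).limUnder_eq

end Ultrafilter

theorem limUnder_measure_ne_top {X : Type*} [MeasurableSpace X] (U : Ultrafilter ℕ)
    (ν : ℕ → Measure X) [∀ j, IsProbabilityMeasure (ν j)] (A : Set X) :
    limUnder (↑U) (fun j => ν j A) ≠ ∞ :=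
  ((le_of_tendsto (U.tendsto_limUnder _) (.of_forall fun _ => prob_le_one)).trans_lt
    ENNReal.one_lt_top).ne

section UltrafilterLimit

variable {X : Type*} [TopologicalSpace X] [MeasurableSpace X] [BorelSpace X]
  (U : Ultrafilter ℕ) (ν : ℕ → Measure X) [∀ j, IsProbabilityMeasure (ν j)]

/-- Unlike a `limsup`, a limit along an ultrafilter is additive, so `K ↦ lim_U ν_j(K)` is a
content. -/
noncomputable def ultrafilterLimitContent : Content X where
  toFun K := (limUnder (↑U) fun j => ν j K).toNNReal
  mono' K₁ K₂ h := ENNReal.toNNReal_mono (limUnder_measure_ne_top U ν _)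
    (U.limUnder_mono fun j => measure_mono h)
  sup_disjoint' K₁ K₂ hK _ hK₂ := by
    simp_rw [TopologicalSpace.Compacts.coe_sup, measure_union hK hK₂.measurableSet]
    rw [U.limUnder_add, ENNReal.toNNReal_add (limUnder_measure_ne_top U ν _)
      (limUnder_measure_ne_top U ν _)]
  sup_le' K₁ K₂ := by
    rw [TopologicalSpace.Compacts.coe_sup, ← ENNReal.toNNReal_add (limUnder_measure_ne_top U ν _)
      (limUnder_measure_ne_top U ν _)]
    refine ENNReal.toNNReal_mono (ENNReal.add_ne_top.2 ⟨limUnder_measure_ne_top U ν _,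
      limUnder_measure_ne_top U ν _⟩) ?_
    rw [← U.limUnder_add]
    exact U.limUnder_mono fun j => measure_union_le _ _

theorem ultrafilterLimitContent_apply (K : TopologicalSpace.Compacts X) :
    ultrafilterLimitContent U ν K = limUnder (↑U) fun j => ν j K :=
  ENNReal.coe_toNNReal (limUnder_measure_ne_top U ν _)

variable [R1Space X]

theorem ultrafilterLimitContent_measure_le {V : Set X} (hV : IsOpen V) {c : ℝ≥0∞}
    (h : ∀ᶠ j in ↑U, ν j V ≤ c) : (ultrafilterLimitContent U ν).measure V ≤ c := by
  rw [Content.measure_apply _ hV.measurableSet, Content.outerMeasure_of_isOpen _ _ hV]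
  refine iSup₂_le fun K hK => ?_
  rw [ultrafilterLimitContent_apply]
  exact le_of_tendsto (U.tendsto_limUnder _) (h.mono fun j hj => (measure_mono hK).trans hj)

theorem le_ultrafilterLimitContent_measure {K : Set X} (hK : IsCompact K) {c : ℝ≥0∞}
    (h : ∀ᶠ j in ↑U, c ≤ ν j K) : c ≤ (ultrafilterLimitContent U ν).measure K :=
  calc c ≤ ultrafilterLimitContent U ν ⟨K, hK⟩ := by
        rw [ultrafilterLimitContent_apply]; exact ge_of_tendsto (U.tendsto_limUnder _) h
    _ ≤ (ultrafilterLimitContent U ν).outerMeasure K := Content.le_outerMeasure_compacts _ _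
    _ ≤ (ultrafilterLimitContent U ν).measure K := le_toMeasure_apply _ _ _

end UltrafilterLimit

section LevelMeasure

variable {X : Type*} [MeasurableSpace X]

noncomputable def levelMeasure (n : ℕ → ℕ) (m : List ℕ → ℝ≥0∞) (x : List ℕ → X) (k : ℕ) :
    Measure X :=
  ∑ σ ∈ Dk n k, m σ • Measure.dirac (x σ)

variable [MeasurableSingletonClass X] {n : ℕ → ℕ}

theorem levelMeasure_apply (m : List ℕ → ℝ≥0∞) (x : List ℕ → X) (k : ℕ) (A : Set X)
    [DecidablePred (· ∈ A)] :
    levelMeasure n m x k A = ∑ σ ∈ Dk n k with x σ ∈ A, m σ := by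
  simp [levelMeasure, Measure.dirac_apply, Set.indicator_apply, sum_filter]

theorem isProbabilityMeasure_levelMeasure {m : List ℕ → ℝ≥0∞} (x : List ℕ → X) {k : ℕ}
    (hm : ∑ σ ∈ Dk n k, m σ = 1) : IsProbabilityMeasure (levelMeasure n m x k) :=
  ⟨by
    classical
    rwa [levelMeasure_apply, filter_true_of_mem fun σ _ => Set.mem_univ (x σ)]⟩

variable {J : List ℕ → Set X} {x : List ℕ → X} {k j : ℕ}

theorem levelMeasure_biUnion_Dk
    (hsub : ∀ k, ∀ σ ∈ Dk n k, ∀ j ∈ Icc 1 (n (k + 1)), J (σ ++ [j]) ⊆ J σ)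
    (hx : ∀ k, ∀ σ ∈ Dk n k, x σ ∈ J σ) (m : List ℕ → ℝ≥0∞) (hkj : k ≤ j) :
    levelMeasure n m x j (⋃ σ ∈ Dk n k, J σ) = levelMeasure n m x j Set.univ := by
  classical
  rw [levelMeasure_apply, levelMeasure_apply]
  congr 1
  refine filter_congr fun τ hτ => iff_of_true ?_ (Set.mem_univ _)
  exact Set.mem_biUnion (take_mem_Dk hkj hτ) (subset_take_of_mem_Dk hsub hkj hτ (hx j τ hτ))

theorem levelMeasure_compl_biUnion_erase_le
    (hsub : ∀ k, ∀ σ ∈ Dk n k, ∀ j ∈ Icc 1 (n (k + 1)), J (σ ++ [j]) ⊆ J σ)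
    (hx : ∀ k, ∀ σ ∈ Dk n k, x σ ∈ J σ) (m : List ℕ → ℝ≥0∞) (σ : List ℕ) (hkj : k ≤ j) :
    levelMeasure n m x j (⋃ τ ∈ (Dk n k).erase σ, J τ)ᶜ ≤
      ∑ τ ∈ Dk n j with τ.take k = σ, m τ := by
  classical
  rw [levelMeasure_apply]
  refine sum_le_sum_of_subset (monotone_filter_right _ fun τ hτ hxτ => ?_)
  by_contra hne
  exact hxτ (Set.mem_biUnion (mem_erase.2 ⟨hne, take_mem_Dk hkj hτ⟩)
    (subset_take_of_mem_Dk hsub hkj hτ (hx j τ hτ)))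

end LevelMeasure

theorem exists_isProbabilityMeasure_le_mass {X : Type*} [TopologicalSpace X] [T2Space X]
    [MeasurableSpace X] [BorelSpace X] {n : ℕ → ℕ} {J : List ℕ → Set X}
    (hcpt : ∀ k, ∀ σ ∈ Dk n k, (J σ).Nonempty ∧ IsCompact (J σ))
    (hsub : ∀ k, ∀ σ ∈ Dk n k, ∀ j ∈ Icc 1 (n (k + 1)), J (σ ++ [j]) ⊆ J σ)
    (hdisj : ∀ k, ∀ σ ∈ Dk n k, ∀ i ∈ Icc 1 (n (k + 1)), ∀ j ∈ Icc 1 (n (k + 1)),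
      i ≠ j → Disjoint (J (σ ++ [i])) (J (σ ++ [j])))
    {m : List ℕ → ℝ≥0∞} (hm : ∀ k, ∀ σ ∈ Dk n k, ∑ j ∈ Icc 1 (n (k + 1)), m (σ ++ [j]) = m σ)
    (hnil : m [] = 1) :
    ∃ μ : Measure X, IsProbabilityMeasure μ ∧ μ (⋂ k, ⋃ σ ∈ Dk n k, J σ) = 1 ∧
      ∀ k, ∀ σ ∈ Dk n k, μ (J σ) ≤ m σ := by
  classical
  obtain ⟨x, hx⟩ : ∃ x : List ℕ → X, ∀ k, ∀ σ ∈ Dk n k, x σ ∈ J σ := by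
    have : Nonempty X := ⟨(hcpt 0 [] (mem_Dk_zero.2 rfl)).1.some⟩
    choose! x hx using fun σ (h : σ ∈ Dk n σ.length) => (hcpt _ σ h).1
    exact ⟨x, fun k σ hσ => hx σ (length_of_mem_Dk hσ ▸ hσ)⟩
  set ν := levelMeasure n m x
  have : ∀ j, IsProbabilityMeasure (ν j) := fun j =>
    isProbabilityMeasure_levelMeasure x (sum_Dk_eq_one hm hnil)
  set U := Ultrafilter.of (atTop : Filter ℕ)
  have hU : ∀ k, ∀ᶠ j in (U : Filter ℕ), k ≤ j := fun k =>
    Ultrafilter.of_le atTop (eventually_ge_atTop k)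
  set μ := (ultrafilterLimitContent U ν).measure
  have hC : ∀ k, IsCompact (⋃ σ ∈ Dk n k, J σ) := fun k =>
    (Dk n k).finite_toSet.isCompact_biUnion fun σ hσ => (hcpt k σ hσ).2
  have hμC : ∀ k, 1 ≤ μ (⋃ σ ∈ Dk n k, J σ) := fun k =>
    le_ultrafilterLimitContent_measure U ν (hC k) <| (hU k).mono fun j hkj =>
      (levelMeasure_biUnion_Dk hsub hx _ hkj).trans measure_univ |>.ge
  have : IsProbabilityMeasure μ := ⟨le_antisymm
    (ultrafilterLimitContent_measure_le U ν isOpen_univ (.of_forall fun _ => prob_le_one))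
    ((hμC 0).trans (measure_mono (Set.subset_univ _)))⟩
  refine ⟨μ, this, ?_, fun k σ hσ => ?_⟩
  · rw [← prob_compl_eq_zero_iff (.iInter fun k => (hC k).measurableSet), Set.compl_iInter]
    exact measure_iUnion_null fun k => (prob_compl_eq_zero_iff (hC k).measurableSet).2
      (le_antisymm prob_le_one (hμC k))
  · set T := ⋃ τ ∈ (Dk n k).erase σ, J τ
    have hT : IsClosed T := ((Dk n k).erase σ).finite_toSet.isClosed_biUnion fun τ hτ =>
      (hcpt k τ (mem_of_mem_erase hτ)).2.isClosed
    have hσT : J σ ⊆ Tᶜ := Set.subset_compl_iff_disjoint_right.2 <|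
      Set.disjoint_iUnion₂_right.2 fun τ hτ =>
        disjoint_of_mem_Dk hsub hdisj hσ (mem_of_mem_erase hτ) (ne_of_mem_erase hτ).symm
    calc μ (J σ) ≤ μ Tᶜ := measure_mono hσT
      _ ≤ m σ := ultrafilterLimitContent_measure_le U ν hT.isOpen_compl <| (hU k).mono
        fun j hkj => (levelMeasure_compl_biUnion_erase_le hsub hx _ σ hkj).trans_eq
          (sum_filter_take_eq hm hσ hkj)

theorem stmt_3_general {N : ℕ}
    (n : ℕ → ℕ)
    (J : List ℕ → Set (EuclideanSpace ℝ (Fin N)))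
    (hcpt : ∀ k : ℕ, ∀ σ ∈ Dk n k,
      (J σ).Nonempty ∧ IsCompact (J σ) ∧ 0 < Metric.diam (J σ))
    (hsub : ∀ k : ℕ, ∀ σ ∈ Dk n k, ∀ j ∈ Finset.Icc 1 (n (k + 1)), J (σ ++ [j]) ⊆ J σ)
    (hdisj : ∀ k : ℕ, ∀ σ ∈ Dk n k, ∀ i ∈ Finset.Icc 1 (n (k + 1)),
      ∀ j ∈ Finset.Icc 1 (n (k + 1)), i ≠ j → Disjoint (J (σ ++ [i])) (J (σ ++ [j])))
    (s : ℝ)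
    (hsum : ∀ k : ℕ, ∀ σ ∈ Dk n k,
      Metric.diam (J σ) ^ s ≤ ∑ j ∈ Finset.Icc 1 (n (k + 1)), Metric.diam (J (σ ++ [j])) ^ s)
    (F : Set (EuclideanSpace ℝ (Fin N)))
    (hF : F = ⋂ k : ℕ, ⋃ σ ∈ Dk n k, J σ) :
    ∃ μ : MeasureTheory.Measure (EuclideanSpace ℝ (Fin N)),
      MeasureTheory.IsProbabilityMeasure μ ∧ μ F = 1 ∧
      ∀ k : ℕ, ∀ σ ∈ Dk n k,
        μ (J σ) ≤ ENNReal.ofReal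
          ((Metric.diam (J σ) / Metric.diam (J ([] : List ℕ))) ^ s) := by
  set w : List ℕ → ℝ := fun σ => Metric.diam (J σ) ^ s
  have hw : ∀ k, ∀ σ ∈ Dk n k, 0 < w σ := fun k σ hσ =>
    Real.rpow_pos_of_pos (hcpt k σ hσ).2.2 s
  have hmass : ∀ k, ∀ σ ∈ Dk n k, ∑ j ∈ Icc 1 (n (k + 1)),
      ENNReal.ofReal (massDist n w (σ ++ [j])) = ENNReal.ofReal (massDist n w σ) := by
    intro k σ hσ
    rw [← ENNReal.ofReal_sum_of_nonneg fun j hj =>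
        (massDist_pos hw hsum (append_mem_Dk hσ hj)).le,
      sum_massDist_children (fun k τ hτ => (branchSum_pos hw hsum hτ).ne') hσ]
  obtain ⟨μ, hμ, hμF, hμJ⟩ := exists_isProbabilityMeasure_le_mass
    (m := fun σ => ENNReal.ofReal (massDist n w σ))
    (fun k σ hσ => ⟨(hcpt k σ hσ).1, (hcpt k σ hσ).2.1⟩) hsub hdisj hmass (by simp)
  refine ⟨μ, hμ, hF ▸ hμF, fun k σ hσ => (hμJ k σ hσ).trans (ENNReal.ofReal_le_ofReal ?_)⟩
  rw [Real.div_rpow Metric.diam_nonneg Metric.diam_nonneg]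
  exact massDist_le_div hw hsum hσ

/-- The mass distribution built in the proof of Proposition 2.2: there is a Borel
probability measure `μ` concentrated on the limit set `F` with
`μ(J_σ) ≤ (diam(J_σ)/diam(J_∅))^s` for every word `σ`. -/
theorem stmt_3 {N : ℕ}
    (n : ℕ → ℕ) (hn : ∀ k, 1 ≤ n k)
    (J : List ℕ → Set (EuclideanSpace ℝ (Fin N)))
    (hcpt : ∀ k : ℕ, ∀ σ ∈ Dk n k,
      (J σ).Nonempty ∧ IsCompact (J σ) ∧ 0 < Metric.diam (J σ))
    (hsub : ∀ k : ℕ, ∀ σ ∈ Dk n k, ∀ j ∈ Finset.Icc 1 (n (k + 1)), J (σ ++ [j]) ⊆ J σ)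
    (hdisj : ∀ k : ℕ, ∀ σ ∈ Dk n k, ∀ i ∈ Finset.Icc 1 (n (k + 1)),
      ∀ j ∈ Finset.Icc 1 (n (k + 1)), i ≠ j → Disjoint (J (σ ++ [i])) (J (σ ++ [j])))
    (s : ℝ) (hs : 0 < s)
    (hsum : ∀ k : ℕ, ∀ σ ∈ Dk n k,
      Metric.diam (J σ) ^ s ≤ ∑ j ∈ Finset.Icc 1 (n (k + 1)), Metric.diam (J (σ ++ [j])) ^ s)
    (F : Set (EuclideanSpace ℝ (Fin N)))
    (hF : F = ⋂ k : ℕ, ⋃ σ ∈ Dk n k, J σ) :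
    ∃ μ : MeasureTheory.Measure (EuclideanSpace ℝ (Fin N)),
      MeasureTheory.IsProbabilityMeasure μ ∧ μ F = 1 ∧
      ∀ k : ℕ, ∀ σ ∈ Dk n k,
        μ (J σ) ≤ ENNReal.ofReal
          ((Metric.diam (J σ) / Metric.diam (J ([] : List ℕ))) ^ s) :=
  stmt_3_general n J hcpt hsub hdisj s hsum F hF
end

section
/- In the setting of an F-limit set F built from an assignment σ ↦ f_σ of m-tuples of compressions on a collection 𝒳 of nonempty compact subsets of a metric space, let s > 0. If sup_{σ∈D} ||U_σ||_s < 1, then dim_H(F) ≤ s. -/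
/-- `Uof 𝒳 g = sup_{E ∈ 𝒳} diam(g E) / diam E`. -/
noncomputable def Uof {X : Type*} [MetricSpace X] (𝒳 : Set (Set X)) (g : Set X → Set X) : ℝ :=
  sSup ((fun E => Metric.diam (g E) / Metric.diam E) '' 𝒳)

/-- `Lof 𝒳 g = inf_{E ∈ 𝒳} diam(g E) / diam E`. -/
noncomputable def Lof {X : Type*} [MetricSpace X] (𝒳 : Set (Set X)) (g : Set X → Set X) : ℝ :=
  sInf ((fun E => Metric.diam (g E) / Metric.diam E) '' 𝒳)

/-- `pnorm s x = (∑ i |x i|^s)^(1/s)`. -/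
noncomputable def pnorm {m : ℕ} (s : ℝ) (x : Fin m → ℝ) : ℝ :=
  (∑ i, |x i| ^ s) ^ (1 / s)

/-!
Let `c < 1` be the supremum of the `s`-norms `‖U_σ‖_s`. Each compression `f_σ^{(j)}` shrinks
diameters by at most the factor `U(f_σ^{(j)}) ≤ c`, so `diam J_σ ≤ c^{|σ|} diam E₀ → 0`; and
`∑_j U(f_σ^{(j)})^s ≤ 1` makes `∑_{|σ| = k} (diam J_σ)^s` non-increasing in `k`. The cylinders of
level `k` therefore cover `F` by sets of vanishing diameter whose `s`-sums stay below
`(diam E₀)^s`, so `μH[s] F < ∞`.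
-/

open Metric Filter Topology MeasureTheory

section Compression

variable {X : Type*} [MetricSpace X] {𝒳 : Set (Set X)} {g : Set X → Set X}

lemma Uof_nonneg : 0 ≤ Uof 𝒳 g :=
  Real.sSup_nonneg <| by rintro _ ⟨E, -, rfl⟩; positivity

lemma diam_div_diam_le_one {E : Set X} (hE : Bornology.IsBounded E) (hgE : g E ⊆ E) :
    diam (g E) / diam E ≤ 1 :=
  div_le_one_of_le₀ (diam_mono hgE hE) diam_nonneg

lemma Uof_le_one (hg : ∀ E ∈ 𝒳, Bornology.IsBounded E ∧ g E ⊆ E) : Uof 𝒳 g ≤ 1 :=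
  Real.sSup_le (by rintro _ ⟨E, hE, rfl⟩; exact diam_div_diam_le_one (hg E hE).1 (hg E hE).2)
    zero_le_one

lemma diam_le_Uof_mul_diam (hg : ∀ E ∈ 𝒳, Bornology.IsBounded E ∧ g E ⊆ E) {E : Set X}
    (hE : E ∈ 𝒳) (hE0 : 0 < diam E) : diam (g E) ≤ Uof 𝒳 g * diam E := by
  rw [← div_le_iff₀ hE0]
  refine le_csSup ⟨1, ?_⟩ ⟨E, hE, rfl⟩
  rintro _ ⟨E, hE, rfl⟩
  exact diam_div_diam_le_one (hg E hE).1 (hg E hE).2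

end Compression

section PNorm

variable {m : ℕ} {s : ℝ} {x : Fin m → ℝ}

lemma pnorm_nonneg : 0 ≤ pnorm s x := by
  unfold pnorm; positivity

lemma pnorm_rpow (hs : s ≠ 0) : pnorm s x ^ s = ∑ i, |x i| ^ s := by
  rw [pnorm, ← Real.rpow_mul (by positivity), one_div_mul_cancel hs, Real.rpow_one]

lemma abs_le_pnorm (hs : 0 < s) (i : Fin m) : |x i| ≤ pnorm s x := by
  rw [← Real.rpow_le_rpow_iff (abs_nonneg _) pnorm_nonneg hs, pnorm_rpow hs.ne']
  exact Finset.single_le_sum (f := fun j => |x j| ^ s) (fun j _ => by positivity)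
    (Finset.mem_univ i)

lemma pnorm_le_card_rpow (hs : 0 < s) (hx : ∀ i, |x i| ≤ 1) : pnorm s x ≤ (m : ℝ) ^ (1 / s) := by
  unfold pnorm
  gcongr
  calc ∑ i, |x i| ^ s ≤ ∑ _i : Fin m, (1 : ℝ) :=
        Finset.sum_le_sum fun i _ => Real.rpow_le_one (abs_nonneg _) (hx i) hs.le
    _ = m := by simp

lemma sum_rpow_le_one_of_pnorm_le_one (hs : 0 < s) (hx : pnorm s x ≤ 1) :
    ∑ i, |x i| ^ s ≤ 1 := by
  rw [← pnorm_rpow hs.ne']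
  exact Real.rpow_le_one pnorm_nonneg hx hs.le

end PNorm

section Words

variable {α : Type*}

lemma sum_ofFn_succ [Fintype α] {M : Type*} [AddCommMonoid M] (φ : List α → M) (k : ℕ) :
    ∑ σ : Fin (k + 1) → α, φ (List.ofFn σ) = ∑ σ : Fin k → α, ∑ a, φ (List.ofFn σ ++ [a]) := by
  rw [← (Fin.snocEquiv fun _ => α).sum_comp, Fintype.sum_prod_type, Finset.sum_comm]
  simp only [Fin.snocEquiv, Equiv.coe_fn_mk, List.ofFn_succ', Fin.snoc_castSucc, Fin.snoc_last,
    List.concat_eq_append]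

lemma sum_ofFn_le_of_sum_append_le [Fintype α] {M : Type*} [AddCommMonoid M] [PartialOrder M]
    [IsOrderedAddMonoid M] (w : List α → M) (hw : ∀ σ, ∑ a, w (σ ++ [a]) ≤ w σ) (k : ℕ) :
    ∑ σ : Fin k → α, w (List.ofFn σ) ≤ w [] := by
  induction k with
  | zero => simp
  | succ k ih =>
    rw [sum_ofFn_succ]
    exact (Finset.sum_le_sum fun σ _ => hw (List.ofFn σ)).trans ih

lemma iUnion_length_eq_subset {X : Type*} (J : List α → Set X) (k : ℕ) :
    ⋃ (σ : List α) (_ : σ.length = k), J σ ⊆ ⋃ σ : Fin k → α, J (List.ofFn σ) := by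
  simp only [Set.iUnion_subset_iff]
  rintro σ rfl
  exact Set.subset_iUnion_of_subset σ.get (by rw [List.ofFn_get])

end Words

section Covering

variable {X : Type*} [MetricSpace X] {α : Type*} {J : List α → Set X}
  {u : List α → α → ℝ} {c s : ℝ}

lemma diam_le_pow_mul_diam_nil (huc : ∀ σ a, u σ a ≤ c) (hc0 : 0 ≤ c)
    (hdiam : ∀ σ a, diam (J (σ ++ [a])) ≤ u σ a * diam (J σ)) (σ : List α) :
    diam (J σ) ≤ c ^ σ.length * diam (J []) := by
  induction σ using List.reverseRecOn with
  | nil => simp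
  | append_singleton σ a ih =>
    calc diam (J (σ ++ [a])) ≤ u σ a * diam (J σ) := hdiam σ a
      _ ≤ c * (c ^ σ.length * diam (J [])) := mul_le_mul (huc σ a) ih diam_nonneg hc0
      _ = c ^ (σ ++ [a]).length * diam (J []) := by simp [pow_succ]; ring

lemma sum_diam_rpow_le [Fintype α] (hs : 0 ≤ s) (hu0 : ∀ σ a, 0 ≤ u σ a)
    (hsum : ∀ σ, ∑ a, u σ a ^ s ≤ 1)
    (hdiam : ∀ σ a, diam (J (σ ++ [a])) ≤ u σ a * diam (J σ)) (k : ℕ) :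
    ∑ σ : Fin k → α, diam (J (List.ofFn σ)) ^ s ≤ diam (J []) ^ s := by
  refine sum_ofFn_le_of_sum_append_le (fun σ => diam (J σ) ^ s) (fun σ => ?_) k
  calc ∑ a, diam (J (σ ++ [a])) ^ s ≤ ∑ a, (u σ a * diam (J σ)) ^ s :=
        Finset.sum_le_sum fun a _ => Real.rpow_le_rpow diam_nonneg (hdiam σ a) hs
    _ = (∑ a, u σ a ^ s) * diam (J σ) ^ s := by
        simp only [Real.mul_rpow (hu0 σ _) diam_nonneg, Finset.sum_mul]
    _ ≤ diam (J σ) ^ s := mul_le_of_le_one_left (by positivity) (hsum σ)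

lemma ediam_eq_ofReal_diam {E : Set X} (hE : Bornology.IsBounded E) :
    ediam E = ENNReal.ofReal (diam E) :=
  (ENNReal.ofReal_toReal hE.ediam_ne_top).symm

theorem hausdorffMeasure_le_of_diam_append_le [Fintype α] [MeasurableSpace X] [BorelSpace X]
    (hs : 0 < s) (hJ : ∀ σ, Bornology.IsBounded (J σ))
    (hu0 : ∀ σ a, 0 ≤ u σ a) (huc : ∀ σ a, u σ a ≤ c) (hc0 : 0 ≤ c) (hc1 : c < 1)
    (hsum : ∀ σ, ∑ a, u σ a ^ s ≤ 1)
    (hdiam : ∀ σ a, diam (J (σ ++ [a])) ≤ u σ a * diam (J σ)) {F : Set X}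
    (hF : ∀ᶠ k in atTop, F ⊆ ⋃ (σ : List α) (_ : σ.length = k), J σ) :
    μH[s] F ≤ ENNReal.ofReal (diam (J []) ^ s) := by
  have hr : Tendsto (fun k : ℕ => ENNReal.ofReal (c ^ k * diam (J []))) atTop (𝓝 0) := by
    simpa using ENNReal.tendsto_ofReal
      ((tendsto_pow_atTop_nhds_zero_of_lt_one hc0 hc1).mul_const (diam (J [])))
  have hcover := Measure.hausdorffMeasure_le_liminf_sum s F _ hr
    (fun k (σ : Fin k → α) => J (List.ofFn σ)) (Eventually.of_forall fun k σ => ?_)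
    (hF.mono fun k hk => hk.trans (iUnion_length_eq_subset J k))
  · refine hcover.trans (liminf_le_of_le (by isBoundedDefault) fun b hb => ?_)
    refine hb.exists.elim fun k hk => hk.trans ?_
    simp only [ediam_eq_ofReal_diam (hJ _), ENNReal.ofReal_rpow_of_nonneg diam_nonneg hs.le]
    rw [← ENNReal.ofReal_sum_of_nonneg fun _ _ => by positivity]
    exact ENNReal.ofReal_le_ofReal (sum_diam_rpow_le hs.le hu0 hsum hdiam k)
  · rw [ediam_eq_ofReal_diam (hJ _)]
    refine ENNReal.ofReal_le_ofReal ?_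
    simpa using diam_le_pow_mul_diam_nil huc hc0 hdiam (List.ofFn σ)

end Covering

open Filter MeasureTheory Measure Topology NNReal ENNReal in
theorem stmt_5_general {X : Type*} [MetricSpace X] (m : ℕ)
    (𝒳 : Set (Set (X)))
    (h𝒳 : ∀ E ∈ 𝒳, E.Nonempty ∧ IsCompact E ∧ 0 < Metric.diam E)
    (f : List (Fin m) → Fin m → Set (X) → Set (X))
    (hf : ∀ (σ : List (Fin m)) (j : Fin m), ∀ E ∈ 𝒳, f σ j E ∈ 𝒳 ∧ f σ j E ⊆ E)
    (E₀ : Set (X)) (hE₀ : E₀ ∈ 𝒳)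
    (J : List (Fin m) → Set (X))
    (hJnil : J [] = E₀)
    (hJ : ∀ (σ : List (Fin m)) (j : Fin m), J (σ ++ [j]) = f σ j (J σ))
    (F : Set (X))
    (hF : F = ⋂ (k : ℕ) (_ : 1 ≤ k), ⋃ (σ : List (Fin m)) (_ : σ.length = k), J σ)
    (s : ℝ) (hs : 0 < s)
    (hsup : (⨆ σ : List (Fin m), pnorm s (fun j => Uof 𝒳 (f σ j))) < 1) :
    dimH F ≤ ENNReal.ofReal s := by
  borelize X
  have hcomp : ∀ σ j, ∀ E ∈ 𝒳, Bornology.IsBounded E ∧ f σ j E ⊆ E := fun σ j E hE =>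
    ⟨(h𝒳 E hE).2.1.isBounded, (hf σ j E hE).2⟩
  have hJmem : ∀ σ, J σ ∈ 𝒳 := by
    intro σ
    induction σ using List.reverseRecOn with
    | nil => rwa [hJnil]
    | append_singleton τ j ih => rw [hJ]; exact (hf τ j _ ih).1
  set c := ⨆ σ : List (Fin m), pnorm s (fun j => Uof 𝒳 (f σ j))
  -- `⨆` over an unbounded family is `0`; here `0 ≤ U ≤ 1` bounds it.
  have hpc : ∀ σ, pnorm s (fun j => Uof 𝒳 (f σ j)) ≤ c :=
    le_ciSup ⟨(m : ℝ) ^ (1 / s), by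
      rintro _ ⟨σ, rfl⟩
      exact pnorm_le_card_rpow hs fun j => by
        rw [abs_of_nonneg Uof_nonneg]; exact Uof_le_one (hcomp σ j)⟩
  have hμ : μH[s] F ≤ ENNReal.ofReal (diam E₀ ^ s) := by
    rw [← hJnil]
    refine hausdorffMeasure_le_of_diam_append_le (u := fun σ j => Uof 𝒳 (f σ j)) hs
      (fun σ => (h𝒳 _ (hJmem σ)).2.1.isBounded) (fun _ _ => Uof_nonneg) (fun σ j => ?_)
      (pnorm_nonneg.trans (hpc [])) hsup (fun σ => ?_) (fun σ j => ?_)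
      (eventually_atTop.2 ⟨1, fun k hk => hF ▸ Set.iInter₂_subset k hk⟩)
    · exact (le_abs_self _).trans ((abs_le_pnorm hs j).trans (hpc σ))
    · simpa only [abs_of_nonneg Uof_nonneg] using
        sum_rpow_le_one_of_pnorm_le_one hs ((hpc σ).trans hsup.le)
    · rw [hJ]
      exact diam_le_Uof_mul_diam (hcomp σ j) (hJmem σ) (h𝒳 _ (hJmem σ)).2.2
  calc dimH F ≤ s.toNNReal := dimH_le_of_hausdorffMeasure_ne_top <| by
        rw [Real.coe_toNNReal _ hs.le]; exact ne_top_of_le_ne_top ENNReal.ofReal_ne_top hμ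
    _ = ENNReal.ofReal s := rfl

/-- Theorem 4.2(b): if `sup_{σ ∈ D} ‖U_σ‖_s < 1` then `dim_H F ≤ s`. -/
theorem stmt_5 {X : Type*} [MetricSpace X] (m : ℕ) (hm : 2 ≤ m)
    (𝒳 : Set (Set (X)))
    (h𝒳 : ∀ E ∈ 𝒳, E.Nonempty ∧ IsCompact E ∧ 0 < Metric.diam E)
    (f : List (Fin m) → Fin m → Set (X) → Set (X))
    (hf : ∀ (σ : List (Fin m)) (j : Fin m), ∀ E ∈ 𝒳, f σ j E ∈ 𝒳 ∧ f σ j E ⊆ E)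
    (E₀ : Set (X)) (hE₀ : E₀ ∈ 𝒳)
    (J : List (Fin m) → Set (X))
    (hJnil : J [] = E₀)
    (hJ : ∀ (σ : List (Fin m)) (j : Fin m), J (σ ++ [j]) = f σ j (J σ))
    (F : Set (X))
    (hF : F = ⋂ (k : ℕ) (_ : 1 ≤ k), ⋃ (σ : List (Fin m)) (_ : σ.length = k), J σ)
    (s : ℝ) (hs : 0 < s)
    (hsup : (⨆ σ : List (Fin m), pnorm s (fun j => Uof 𝒳 (f σ j))) < 1) :
    dimH F ≤ ENNReal.ofReal s :=
  stmt_5_general m 𝒳 h𝒳 f hf E₀ hE₀ J hJnil hJ F hF s hs hsup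
end

section
/- In the setting of an F-limit set F built from an assignment σ ↦ f_σ of m-tuples of compressions on a collection 𝒳 of nonempty compact subsets of a metric space, let r = (r_1,...,r_m) ∈ (0,1)^m and let s^* > 0 be the unique solution of r_1^{s^*} + r_2^{s^*} + ... + r_m^{s^*} = 1. If U_σ ≤ r coordinatewise for every σ ∈ D, then dim_H(F) ≤ s^*. -/
open MeasureTheory Metric Filter Set
open scoped ENNReal Topology

lemma exists_nonneg_lt_one_forall_le {ι : Type*} [Finite ι] {r : ι → ℝ} (hr : ∀ i, r i < 1) :
    ∃ c, 0 ≤ c ∧ c < 1 ∧ ∀ i, r i ≤ c := by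
  rcases isEmpty_or_nonempty ι with _ | _
  · exact ⟨0, le_rfl, zero_lt_one, isEmptyElim⟩
  · obtain ⟨i₀, hi₀⟩ := Finite.exists_max r
    exact ⟨max 0 (r i₀), le_max_left _ _, max_lt zero_lt_one (hr i₀),
      fun i => (hi₀ i).trans (le_max_right _ _)⟩

lemma iUnion_length_eq_eq_iUnion_ofFn {ι α : Type*} (t : List ι → Set α) (n : ℕ) :
    ⋃ (σ : List ι) (_ : σ.length = n), t σ = ⋃ g : Fin n → ι, t (List.ofFn g) := by
  ext x
  simp only [mem_iUnion]
  constructor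
  · rintro ⟨σ, rfl, hx⟩
    exact ⟨σ.get, by rwa [List.ofFn_get]⟩
  · rintro ⟨g, hx⟩
    exact ⟨_, List.length_ofFn, hx⟩

section Words

variable {ι : Type*} {r : ι → ℝ}

lemma prod_map_le_pow_length {c : ℝ} (hr0 : ∀ i, 0 ≤ r i) (hrc : ∀ i, r i ≤ c) (σ : List ι) :
    (σ.map r).prod ≤ c ^ σ.length := by
  simpa [List.map_const', List.prod_replicate] using
    List.prod_map_le_prod_map₀ r (fun _ => c) (fun i _ => hr0 i) (fun i _ => hrc i)

lemma sum_prod_map_ofFn_rpow [Fintype ι] (hr0 : ∀ i, 0 ≤ r i) (s : ℝ) (n : ℕ) :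
    ∑ g : Fin n → ι, ((List.ofFn g).map r).prod ^ s = (∑ i, r i ^ s) ^ n := by
  simp_rw [List.map_ofFn, List.prod_ofFn, Function.comp_apply,
    ← Real.finsetProd_rpow _ _ (fun i _ => hr0 _)]
  exact (Fintype.sum_pow (fun i => r i ^ s) n).symm

variable {X : Type*} [EMetricSpace X] [Fintype ι] {s D : ℝ} {t : List ι → Set X} {F : Set X}

theorem hausdorffMeasure_le_of_cover_words [MeasurableSpace X] [BorelSpace X]
    (hr0 : ∀ i, 0 ≤ r i) (hr1 : ∀ i, r i < 1) (hs : 0 ≤ s) (hsum : ∑ i, r i ^ s = 1)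
    (hD : 0 ≤ D) (ht : ∀ σ, ediam (t σ) ≤ ENNReal.ofReal (D * (σ.map r).prod))
    (hF : ∀ᶠ n in atTop, F ⊆ ⋃ (σ : List ι) (_ : σ.length = n), t σ) :
    μH[s] F ≤ ENNReal.ofReal (D ^ s) := by
  obtain ⟨c, hc0, hc1, hrc⟩ := exists_nonneg_lt_one_forall_le hr1
  have hprod (σ : List ι) : 0 ≤ (σ.map r).prod :=
    List.prod_nonneg (by simpa using fun i _ => hr0 i)
  have hR : Tendsto (fun n : ℕ => ENNReal.ofReal (D * c ^ n)) atTop (𝓝 0) := by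
    simpa using ENNReal.tendsto_ofReal
      ((tendsto_pow_atTop_nhds_zero_of_lt_one hc0 hc1).const_mul D)
  have hdiam (n : ℕ) (g : Fin n → ι) : ediam (t (List.ofFn g)) ≤ ENNReal.ofReal (D * c ^ n) :=
    (ht _).trans <| ENNReal.ofReal_le_ofReal <| mul_le_mul_of_nonneg_left
      (by simpa using prod_map_le_pow_length hr0 hrc (List.ofFn g)) hD
  have hsum_le (n : ℕ) :
      ∑ g : Fin n → ι, ediam (t (List.ofFn g)) ^ s ≤ ENNReal.ofReal (D ^ s) :=
    calc ∑ g : Fin n → ι, ediam (t (List.ofFn g)) ^ s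
        ≤ ∑ g : Fin n → ι, ENNReal.ofReal ((D * ((List.ofFn g).map r).prod) ^ s) := by
          gcongr with g
          rw [← ENNReal.ofReal_rpow_of_nonneg (mul_nonneg hD (hprod _)) hs]
          exact ENNReal.rpow_le_rpow (ht _) hs
      _ = ENNReal.ofReal (D ^ s * (∑ i, r i ^ s) ^ n) := by
          rw [← ENNReal.ofReal_sum_of_nonneg
            (fun g _ => Real.rpow_nonneg (mul_nonneg hD (hprod _)) s),
            ← sum_prod_map_ofFn_rpow hr0, Finset.mul_sum]
          simp only [Real.mul_rpow hD (hprod _)]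
      _ = ENNReal.ofReal (D ^ s) := by rw [hsum, one_pow, mul_one]
  calc μH[s] F
      ≤ liminf (fun n => ∑ g : Fin n → ι, ediam (t (List.ofFn g)) ^ s) atTop :=
        Measure.hausdorffMeasure_le_liminf_sum s F _ hR (fun n g => t (List.ofFn g))
          (.of_forall hdiam) (by simpa only [iUnion_length_eq_eq_iUnion_ofFn] using hF)
    _ ≤ ENNReal.ofReal (D ^ s) := liminf_le_of_frequently_le' (.of_forall hsum_le)

theorem dimH_le_of_cover_words
    (hr0 : ∀ i, 0 ≤ r i) (hr1 : ∀ i, r i < 1) (hs : 0 ≤ s) (hsum : ∑ i, r i ^ s = 1)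
    (hD : 0 ≤ D) (ht : ∀ σ, ediam (t σ) ≤ ENNReal.ofReal (D * (σ.map r).prod))
    (hF : ∀ᶠ n in atTop, F ⊆ ⋃ (σ : List ι) (_ : σ.length = n), t σ) :
    dimH F ≤ ENNReal.ofReal s := by
  borelize X
  refine dimH_le_of_hausdorffMeasure_ne_top (d := s.toNNReal) ?_
  rw [Real.coe_toNNReal s hs]
  exact ne_top_of_le_ne_top ENNReal.ofReal_ne_top
    (hausdorffMeasure_le_of_cover_words hr0 hr1 hs hsum hD ht hF)

end Words

section Compression

variable {X : Type*} {𝒳 : Set (Set X)}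

lemma diam_image_le_Uof_mul_diam [MetricSpace X] {g : Set X → Set X}
    (hbdd : ∀ E ∈ 𝒳, Bornology.IsBounded E) (hg : ∀ E ∈ 𝒳, g E ⊆ E) {E : Set X} (hE : E ∈ 𝒳)
    (hpos : 0 < diam E) : diam (g E) ≤ Uof 𝒳 g * diam E := by
  have hratio : BddAbove ((fun E => diam (g E) / diam E) '' 𝒳) := by
    refine ⟨1, ?_⟩
    rintro _ ⟨E', hE', rfl⟩
    exact div_le_one_of_le₀ (diam_mono (hg E' hE') (hbdd E' hE')) diam_nonneg
  exact (div_le_iff₀ hpos).1 (le_csSup hratio ⟨E, hE, rfl⟩)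

variable {ι : Type*} {f : List ι → ι → Set X → Set X} {E₀ : Set X} {J : List ι → Set X}

lemma mem_of_iterated_compressions (hf : ∀ σ j, ∀ E ∈ 𝒳, f σ j E ∈ 𝒳 ∧ f σ j E ⊆ E)
    (hE₀ : E₀ ∈ 𝒳) (hJnil : J [] = E₀) (hJ : ∀ σ j, J (σ ++ [j]) = f σ j (J σ))
    (σ : List ι) : J σ ∈ 𝒳 := by
  induction σ using List.reverseRecOn with
  | nil => rwa [hJnil]
  | append_singleton σ j ih => rw [hJ]; exact (hf σ j _ ih).1

lemma diam_iterated_compressions_le [MetricSpace X]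
    (h𝒳 : ∀ E ∈ 𝒳, Bornology.IsBounded E ∧ 0 < diam E)
    (hf : ∀ σ j, ∀ E ∈ 𝒳, f σ j E ∈ 𝒳 ∧ f σ j E ⊆ E)
    (hE₀ : E₀ ∈ 𝒳) (hJnil : J [] = E₀) (hJ : ∀ σ j, J (σ ++ [j]) = f σ j (J σ))
    {r : ι → ℝ} (hr0 : ∀ i, 0 ≤ r i) (hU : ∀ σ i, Uof 𝒳 (f σ i) ≤ r i) (σ : List ι) :
    diam (J σ) ≤ diam E₀ * (σ.map r).prod := by
  induction σ using List.reverseRecOn with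
  | nil => simp [hJnil]
  | append_singleton σ j ih =>
    have hmem := mem_of_iterated_compressions hf hE₀ hJnil hJ σ
    calc diam (J (σ ++ [j]))
        ≤ Uof 𝒳 (f σ j) * diam (J σ) := by
          rw [hJ]
          exact diam_image_le_Uof_mul_diam (fun E hE => (h𝒳 E hE).1)
            (fun E hE => (hf σ j E hE).2) hmem (h𝒳 _ hmem).2
      _ ≤ r j * (diam E₀ * (σ.map r).prod) := by
          gcongr
          exacts [hr0 j, hU σ j]
      _ = diam E₀ * ((σ ++ [j]).map r).prod := by
          rw [List.map_append, List.prod_append, List.map_singleton, List.prod_singleton]; ring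

end Compression

theorem stmt_8_general {X : Type*} [MetricSpace X] (m : ℕ)
    (𝒳 : Set (Set (X)))
    (h𝒳 : ∀ E ∈ 𝒳, E.Nonempty ∧ IsCompact E ∧ 0 < Metric.diam E)
    (f : List (Fin m) → Fin m → Set (X) → Set (X))
    (hf : ∀ (σ : List (Fin m)) (j : Fin m), ∀ E ∈ 𝒳, f σ j E ∈ 𝒳 ∧ f σ j E ⊆ E)
    (E₀ : Set (X)) (hE₀ : E₀ ∈ 𝒳)
    (J : List (Fin m) → Set (X))
    (hJnil : J [] = E₀)
    (hJ : ∀ (σ : List (Fin m)) (j : Fin m), J (σ ++ [j]) = f σ j (J σ))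
    (F : Set (X))
    (hF : F = ⋂ (k : ℕ) (_ : 1 ≤ k), ⋃ (σ : List (Fin m)) (_ : σ.length = k), J σ)
    (r : Fin m → ℝ) (hr : ∀ i, r i ∈ Set.Ioo (0 : ℝ) 1)
    (sStar : ℝ) (hsStar : 0 < sStar)
    (hsol : ∑ i, r i ^ sStar = 1)
    (hU : ∀ (σ : List (Fin m)) (i : Fin m), Uof 𝒳 (f σ i) ≤ r i) :
    dimH F ≤ ENNReal.ofReal sStar := by
  have hJ𝒳 := mem_of_iterated_compressions hf hE₀ hJnil hJ
  refine dimH_le_of_cover_words (t := J) (fun i => (hr i).1.le) (fun i => (hr i).2) hsStar.le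
    hsol (D := diam E₀) diam_nonneg (fun σ => ?_) ?_
  · rw [← ENNReal.ofReal_toReal ((h𝒳 _ (hJ𝒳 σ)).2.1.isBounded.ediam_ne_top)]
    exact ENNReal.ofReal_le_ofReal (diam_iterated_compressions_le
      (fun E hE => ⟨(h𝒳 E hE).2.1.isBounded, (h𝒳 E hE).2.2⟩)
      hf hE₀ hJnil hJ (fun i => (hr i).1.le) hU σ)
  · filter_upwards [eventually_ge_atTop 1] with n hn
    rw [hF]
    exact Set.iInter₂_subset n hn

/-- Corollary 4.5(b): if `U_σ ≤ r` coordinatewise for all `σ`, where `r ∈ (0,1)^m` and `∑ r_i^{s^*} = 1`, then `dim_H F ≤ s^*`. -/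
theorem stmt_8 {X : Type*} [MetricSpace X] (m : ℕ) (hm : 2 ≤ m)
    (𝒳 : Set (Set (X)))
    (h𝒳 : ∀ E ∈ 𝒳, E.Nonempty ∧ IsCompact E ∧ 0 < Metric.diam E)
    (f : List (Fin m) → Fin m → Set (X) → Set (X))
    (hf : ∀ (σ : List (Fin m)) (j : Fin m), ∀ E ∈ 𝒳, f σ j E ∈ 𝒳 ∧ f σ j E ⊆ E)
    (E₀ : Set (X)) (hE₀ : E₀ ∈ 𝒳)
    (J : List (Fin m) → Set (X))
    (hJnil : J [] = E₀)
    (hJ : ∀ (σ : List (Fin m)) (j : Fin m), J (σ ++ [j]) = f σ j (J σ))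
    (F : Set (X))
    (hF : F = ⋂ (k : ℕ) (_ : 1 ≤ k), ⋃ (σ : List (Fin m)) (_ : σ.length = k), J σ)
    (r : Fin m → ℝ) (hr : ∀ i, r i ∈ Set.Ioo (0 : ℝ) 1)
    (sStar : ℝ) (hsStar : 0 < sStar)
    (hsol : ∑ i, r i ^ sStar = 1)
    (hU : ∀ (σ : List (Fin m)) (i : Fin m), Uof 𝒳 (f σ i) ≤ r i) :
    dimH F ≤ ENNReal.ofReal sStar :=
  stmt_8_general m 𝒳 h𝒳 f hf E₀ hE₀ J hJnil hJ F hF r hr sStar hsStar hsol hU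
end

section
/- In the setting of an F-limit set F built from an assignment σ ↦ f_σ of m-tuples of compressions on a collection 𝒳 of nonempty compact subsets of a metric space, let r ∈ (0,1). If U_σ ≤ (r,...,r) coordinatewise for every σ ∈ D, then dim_H(F) ≤ log(m)/(−log r). -/
/-! Along every branch diameters shrink by at least the factor `r` per step, so for each `k` the
`m ^ k` sets `J σ` with `|σ| = k` cover `F` and have diameter at most `r ^ k * diam E₀`. For
`d > log m / (-log r)` we have `m * r ^ d < 1`, hence the Hausdorff sums
`m ^ k * (r ^ k * diam E₀) ^ d` tend to zero and `μH[d] F = 0`. -/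

open scoped MeasureTheory
open Filter Topology Metric Bornology

lemma mul_rpow_lt_one_of_log_div_lt {m r d : ℝ} (hm : 0 ≤ m) (hr0 : 0 < r) (hr1 : r < 1)
    (hd : Real.log m / -Real.log r < d) : m * r ^ d < 1 := by
  rcases hm.eq_or_lt with rfl | hm
  · simp
  have hlog : Real.log m < d * -Real.log r :=
    (div_lt_iff₀ (neg_pos.2 (Real.log_neg hr0 hr1))).1 hd
  rw [← Real.log_neg_iff (by positivity), Real.log_mul hm.ne' (by positivity), Real.log_rpow hr0]
  linarith

lemma tendsto_ofReal_mul_pow_atTop_nhds_zero (c : ℝ) {q : ℝ} (hq0 : 0 ≤ q) (hq1 : q < 1) :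
    Tendsto (fun k : ℕ => ENNReal.ofReal (c * q ^ k)) atTop (𝓝 0) := by
  simpa using ENNReal.tendsto_ofReal ((tendsto_pow_atTop_nhds_zero_of_lt_one hq0 hq1).const_mul c)

section Cover

variable {X : Type*} [EMetricSpace X] {ι : ℕ → Type*} [∀ k, Fintype (ι k)]
  {F : Set X} {t : ∀ k, ι k → Set X} {m : ℕ} {C r : ℝ}

lemma sum_ediam_rpow_le_of_cover (hC : 0 ≤ C) (hr : 0 ≤ r) {d : ℝ} (hd : 0 ≤ d)
    (hcard : ∀ k, Fintype.card (ι k) ≤ m ^ k)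
    (hdiam : ∀ k i, ediam (t k i) ≤ ENNReal.ofReal (C * r ^ k)) (k : ℕ) :
    ∑ i, ediam (t k i) ^ d ≤ ENNReal.ofReal (C ^ d * (m * r ^ d) ^ k) := by
  calc ∑ i, ediam (t k i) ^ d
      ≤ ∑ _i : ι k, ENNReal.ofReal ((C * r ^ k) ^ d) := by
        gcongr with i
        rw [← ENNReal.ofReal_rpow_of_nonneg (by positivity) hd]
        exact ENNReal.rpow_le_rpow (hdiam k i) hd
    _ = Fintype.card (ι k) * ENNReal.ofReal ((C * r ^ k) ^ d) := by
        rw [Finset.sum_const, Finset.card_univ, nsmul_eq_mul]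
    _ ≤ (m ^ k : ℕ) * ENNReal.ofReal ((C * r ^ k) ^ d) := by
        gcongr
        exact hcard k
    _ = ENNReal.ofReal (C ^ d * (m * r ^ d) ^ k) := by
        rw [← ENNReal.ofReal_natCast, ← ENNReal.ofReal_mul (by positivity),
          Real.mul_rpow hC (by positivity), ← Real.rpow_pow_comm hr]
        push_cast
        ring_nf

lemma hausdorffMeasure_eq_zero_of_cover [MeasurableSpace X] [BorelSpace X]
    (hC : 0 ≤ C) (hr0 : 0 < r) (hr1 : r < 1)
    (hcard : ∀ k, Fintype.card (ι k) ≤ m ^ k)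
    (hdiam : ∀ k i, ediam (t k i) ≤ ENNReal.ofReal (C * r ^ k))
    (hcover : ∀ᶠ k in atTop, F ⊆ ⋃ i, t k i) {d : ℝ} (hd : 0 ≤ d) (hmd : m * r ^ d < 1) :
    μH[d] F = 0 := by
  have hsum_lim : Tendsto (fun k => ENNReal.ofReal (C ^ d * (m * r ^ d) ^ k)) atTop (𝓝 0) :=
    tendsto_ofReal_mul_pow_atTop_nhds_zero _ (by positivity) hmd
  refine le_antisymm ?_ zero_le
  calc μH[d] F ≤ liminf (fun k => ∑ i, ediam (t k i) ^ d) atTop :=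
        MeasureTheory.Measure.hausdorffMeasure_le_liminf_sum d F _
          (tendsto_ofReal_mul_pow_atTop_nhds_zero C hr0.le hr1) t
          (Eventually.of_forall (hdiam ·)) hcover
    _ ≤ liminf (fun k => ENNReal.ofReal (C ^ d * (m * r ^ d) ^ k)) atTop :=
        liminf_le_liminf (Eventually.of_forall
          (sum_ediam_rpow_le_of_cover hC hr0.le hd hcard hdiam))
    _ = 0 := hsum_lim.liminf_eq

theorem dimH_le_of_cover (hC : 0 ≤ C) (hr0 : 0 < r) (hr1 : r < 1)
    (hcard : ∀ k, Fintype.card (ι k) ≤ m ^ k)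
    (hdiam : ∀ k i, ediam (t k i) ≤ ENNReal.ofReal (C * r ^ k))
    (hcover : ∀ᶠ k in atTop, F ⊆ ⋃ i, t k i) :
    dimH F ≤ ENNReal.ofReal (Real.log m / -Real.log r) := by
  borelize X
  refine dimH_le fun d hd_top => le_of_not_gt fun hlt => ?_
  rw [← ENNReal.ofReal_coe_nnreal, ENNReal.ofReal_lt_ofReal_iff'] at hlt
  have hmd : (m : ℝ) * r ^ (d : ℝ) < 1 :=
    mul_rpow_lt_one_of_log_div_lt m.cast_nonneg hr0 hr1 hlt.1
  exact ENNReal.zero_ne_top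
    ((hausdorffMeasure_eq_zero_of_cover hC hr0 hr1 hcard hdiam hcover d.2 hmd).symm.trans hd_top)

end Cover

section Compression

variable {X : Type*} [MetricSpace X] {𝒳 : Set (Set X)} {g : Set X → Set X}

lemma bddAbove_diam_div_diam (hbdd : ∀ E ∈ 𝒳, IsBounded E) (hsub : ∀ E ∈ 𝒳, g E ⊆ E) :
    BddAbove ((fun E => diam (g E) / diam E) '' 𝒳) := by
  refine ⟨1, ?_⟩
  rintro _ ⟨E, hE, rfl⟩
  exact div_le_one_of_le₀ (diam_mono (hsub E hE) (hbdd E hE)) diam_nonneg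

lemma diam_le_mul_diam_of_Uof_le (hbdd : ∀ E ∈ 𝒳, IsBounded E) (hsub : ∀ E ∈ 𝒳, g E ⊆ E)
    {r : ℝ} (hU : Uof 𝒳 g ≤ r) {E : Set X} (hE : E ∈ 𝒳) : diam (g E) ≤ r * diam E := by
  have hmono : diam (g E) ≤ diam E := diam_mono (hsub E hE) (hbdd E hE)
  rcases (diam_nonneg (s := E)).eq_or_lt with h0 | hpos
  · rw [← h0] at hmono ⊢
    simpa using hmono
  have hratio : diam (g E) / diam E ≤ r :=
    (le_csSup (bddAbove_diam_div_diam hbdd hsub) ⟨E, hE, rfl⟩).trans hU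
  exact (div_le_iff₀ hpos).1 hratio

end Compression

lemma List.mem_of_apply_append_singleton {α β : Type*} {S : Set β} {J : List α → β}
    {g : List α → α → β → β} (hnil : J [] ∈ S) (hg : ∀ σ j, ∀ b ∈ S, g σ j b ∈ S)
    (hJ : ∀ σ j, J (σ ++ [j]) = g σ j (J σ)) (σ : List α) : J σ ∈ S := by
  induction σ using List.reverseRecOn with
  | nil => exact hnil
  | append_singleton σ j ih => rw [hJ]; exact hg σ j _ ih

lemma diam_le_pow_length_mul {α X : Type*} [PseudoMetricSpace X] {J : List α → Set X} {r : ℝ}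
    (hr : 0 ≤ r) (hstep : ∀ σ j, diam (J (σ ++ [j])) ≤ r * diam (J σ)) (σ : List α) :
    diam (J σ) ≤ r ^ σ.length * diam (J []) := by
  induction σ using List.reverseRecOn with
  | nil => simp
  | append_singleton σ j ih =>
    calc diam (J (σ ++ [j])) ≤ r * diam (J σ) := hstep σ j
      _ ≤ r * (r ^ σ.length * diam (J [])) := by gcongr
      _ = r ^ (σ ++ [j]).length * diam (J []) := by simp [pow_succ]; ring

theorem stmt_11_general {X : Type*} [MetricSpace X] (m : ℕ)
    (𝒳 : Set (Set (X)))
    (h𝒳 : ∀ E ∈ 𝒳, E.Nonempty ∧ IsCompact E ∧ 0 < Metric.diam E)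
    (f : List (Fin m) → Fin m → Set (X) → Set (X))
    (hf : ∀ (σ : List (Fin m)) (j : Fin m), ∀ E ∈ 𝒳, f σ j E ∈ 𝒳 ∧ f σ j E ⊆ E)
    (E₀ : Set (X)) (hE₀ : E₀ ∈ 𝒳)
    (J : List (Fin m) → Set (X))
    (hJnil : J [] = E₀)
    (hJ : ∀ (σ : List (Fin m)) (j : Fin m), J (σ ++ [j]) = f σ j (J σ))
    (F : Set (X))
    (hF : F = ⋂ (k : ℕ) (_ : 1 ≤ k), ⋃ (σ : List (Fin m)) (_ : σ.length = k), J σ)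
    (r : ℝ) (hr : r ∈ Set.Ioo (0 : ℝ) 1)
    (hU : ∀ (σ : List (Fin m)) (i : Fin m), Uof 𝒳 (f σ i) ≤ r) :
    dimH F ≤ ENNReal.ofReal (Real.log m / (-Real.log r)) := by
  obtain ⟨hr0, hr1⟩ := hr
  have hbdd : ∀ E ∈ 𝒳, IsBounded E := fun E hE => (h𝒳 E hE).2.1.isBounded
  have hmem : ∀ σ, J σ ∈ 𝒳 :=
    List.mem_of_apply_append_singleton (hJnil ▸ hE₀) (fun σ j E hE => (hf σ j E hE).1) hJ
  have hstep : ∀ σ j, diam (J (σ ++ [j])) ≤ r * diam (J σ) := fun σ j =>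
    hJ σ j ▸ diam_le_mul_diam_of_Uof_le hbdd (fun E hE => (hf σ j E hE).2) (hU σ j) (hmem σ)
  have hdiam : ∀ k (v : List.Vector (Fin m) k),
      ediam (J v.1) ≤ ENNReal.ofReal (diam E₀ * r ^ k) := by
    intro k v
    refine (ENNReal.le_ofReal_iff_toReal_le (hbdd _ (hmem v.1)).ediam_ne_top
      (by positivity)).2 ?_
    have := diam_le_pow_length_mul hr0.le hstep v.1
    rwa [v.2, hJnil, mul_comm] at this
  have hcover : ∀ᶠ k in atTop, F ⊆ ⋃ v : List.Vector (Fin m) k, J v.1 := by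
    filter_upwards [eventually_ge_atTop 1] with k hk x hx
    rw [hF] at hx
    obtain ⟨σ, hσ, hxσ⟩ := by simpa using Set.mem_iInter₂.1 hx k hk
    exact Set.mem_iUnion.2 ⟨⟨σ, hσ⟩, hxσ⟩
  exact dimH_le_of_cover diam_nonneg hr0 hr1 (fun k => by simp) hdiam hcover

/-- Corollary 4.6(b): if `U_σ ≤ (r,…,r)` for all `σ` with `r ∈ (0,1)`, then `dim_H F ≤ log m / (− log r)`. -/
theorem stmt_11 {X : Type*} [MetricSpace X] (m : ℕ) (hm : 2 ≤ m)
    (𝒳 : Set (Set (X)))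
    (h𝒳 : ∀ E ∈ 𝒳, E.Nonempty ∧ IsCompact E ∧ 0 < Metric.diam E)
    (f : List (Fin m) → Fin m → Set (X) → Set (X))
    (hf : ∀ (σ : List (Fin m)) (j : Fin m), ∀ E ∈ 𝒳, f σ j E ∈ 𝒳 ∧ f σ j E ⊆ E)
    (E₀ : Set (X)) (hE₀ : E₀ ∈ 𝒳)
    (J : List (Fin m) → Set (X))
    (hJnil : J [] = E₀)
    (hJ : ∀ (σ : List (Fin m)) (j : Fin m), J (σ ++ [j]) = f σ j (J σ))
    (F : Set (X))
    (hF : F = ⋂ (k : ℕ) (_ : 1 ≤ k), ⋃ (σ : List (Fin m)) (_ : σ.length = k), J σ)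
    (r : ℝ) (hr : r ∈ Set.Ioo (0 : ℝ) 1)
    (hU : ∀ (σ : List (Fin m)) (i : Fin m), Uof 𝒳 (f σ i) ≤ r) :
    dimH F ≤ ENNReal.ofReal (Real.log m / (-Real.log r)) :=
  stmt_11_general m 𝒳 h𝒳 f hf E₀ hE₀ J hJnil hJ F hF r hr hU
end

section
/- Let the Cantor-type construction be driven by the sequence k_ℓ = ((ℓ+1)/(4ℓ+6), (2ℓ+5)/(8ℓ+16)) for ℓ ≥ 0. Then the resulting limit set F ⊆ [0,1] satisfies dim_H(F) = 1/2. -/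
/-!
Every interval of generation `n` has length between `4⁻ⁿ / 3` and `2 · 4⁻ⁿ`, and the two children
of such an interval are separated by a gap of at least `(7/48) · 4⁻ⁿ`. Covering `F` by the `2ⁿ`
intervals of generation `n` bounds its `1/2`-dimensional Hausdorff measure by `√2`, so
`dimH F ≤ 1/2`. Conversely, each point of `F` lies on a unique path of nested intervals, coded by
binary digits `ω`; the map `x ↦ 0.ω₀ω₁…₂` sends `F` onto `[0, 1]`, and since two points whose
codes first differ at digit `i` are at distance at least `(7/48) · 4⁻ⁱ`, it is `1/2`-Hölder. Hence
`1 = dimH [0, 1] ≤ 2 · dimH F`.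

The same argument applies to any binary scheme of compact sets whose diameters are `O(rⁿ)` and
whose sibling gaps are `≳ rⁿ`; its limit set has dimension `s` with `r ^ s = 1/2`.
-/

open MeasureTheory Set Filter
open scoped NNReal ENNReal

namespace CantorScheme

/-- The sets of a scheme are indexed like a binary heap: the children of `ℓ` are `2ℓ + 1` and
`2ℓ + 2`, so generation `n` consists of the `2ⁿ` indices at depth `n`. -/
def generation (n : ℕ) : Finset ℕ := Finset.Icc (2 ^ n - 1) (2 ^ (n + 1) - 2)

lemma mem_generation {n ℓ : ℕ} : ℓ ∈ generation n ↔ 2 ^ n ≤ ℓ + 1 ∧ ℓ + 2 ≤ 2 * 2 ^ n := by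
  have := n.one_le_two_pow
  rw [generation, Finset.mem_Icc, pow_succ']
  omega

lemma card_generation (n : ℕ) : (generation n).card = 2 ^ n := by
  have := n.one_le_two_pow
  rw [generation, Nat.card_Icc, pow_succ']
  omega

lemma exists_mem_generation (ℓ : ℕ) : ∃ n, ℓ ∈ generation n := by
  have := Nat.lt_pow_succ_log_self one_lt_two (ℓ + 1)
  rw [pow_succ'] at this
  exact ⟨_, mem_generation.2 ⟨Nat.pow_log_le_self 2 ℓ.succ_ne_zero, by omega⟩⟩

def node (ω : ℕ → Fin 2) : ℕ → ℕ
  | 0 => 0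
  | n + 1 => 2 * node ω n + 1 + ω n

lemma node_succ_eq_or (ω : ℕ → Fin 2) (n : ℕ) :
    node ω (n + 1) = 2 * node ω n + 1 ∨ node ω (n + 1) = 2 * node ω n + 2 := by
  have := (ω n).isLt
  rw [node]
  omega

lemma node_mem_generation (ω : ℕ → Fin 2) (n : ℕ) : node ω n ∈ generation n := by
  induction n with
  | zero => simp [node, generation]
  | succ n ih =>
    rw [mem_generation, pow_succ'] at *
    have := node_succ_eq_or ω n
    omega

lemma node_congr {ω ω' : ℕ → Fin 2} {n : ℕ} (h : ∀ i < n, ω i = ω' i) :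
    node ω n = node ω' n := by
  induction n with
  | zero => rfl
  | succ n ih => rw [node, node, ih fun i hi => h i (by omega), h n n.lt_succ_self]

lemma exists_node_eq {n ℓ : ℕ} (hℓ : ℓ ∈ generation n) : ∃ ω, node ω n = ℓ := by
  induction n generalizing ℓ with
  | zero => exact ⟨0, by simp_all [node, generation]⟩
  | succ n ih =>
    have hℓ' := mem_generation.1 hℓ
    rw [pow_succ'] at hℓ'
    obtain ⟨ω, hω⟩ := ih (ℓ := (ℓ - 1) / 2) (mem_generation.2 (by omega))
    refine ⟨Function.update ω n ⟨(ℓ - 1) % 2, Nat.mod_lt _ two_pos⟩, ?_⟩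
    rw [node, node_congr (ω' := ω) fun i hi => Function.update_of_ne hi.ne _ _, hω,
      Function.update_self]
    have := Nat.one_le_two_pow (n := n)
    dsimp only
    omega

def limitSet {X : Type*} (E : ℕ → Set X) : Set X :=
  ⋂ (n : ℕ) (_ : 1 ≤ n), ⋃ ℓ ∈ generation n, E ℓ

def IsNested {X : Type*} (E : ℕ → Set X) : Prop :=
  ∀ ℓ (d : Fin 2), E (2 * ℓ + 1 + d) ⊆ E ℓ

def SiblingsSeparated {X : Type*} [PseudoMetricSpace X] (E : ℕ → Set X) (c r : ℝ) : Prop :=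
  ∀ n, ∀ ℓ ∈ generation n, ∀ x ∈ E (2 * ℓ + 1), ∀ y ∈ E (2 * ℓ + 2), c * r ^ n ≤ dist x y

def IsAddress {X : Type*} (E : ℕ → Set X) (x : X) (ω : ℕ → Fin 2) : Prop :=
  ∀ n, x ∈ E (node ω n)

section Nested

variable {X : Type*} {E : ℕ → Set X}

lemma IsAddress.mem_limitSet {x : X} {ω : ℕ → Fin 2} (h : IsAddress E x ω) : x ∈ limitSet E :=
  mem_iInter₂.2 fun n _ => mem_biUnion (node_mem_generation ω n) (h n)

lemma IsNested.antitone_node (hnest : IsNested E) (ω : ℕ → Fin 2) :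
    Antitone fun n => E (node ω n) :=
  antitone_nat_of_succ_le fun _ => hnest _ _

lemma IsNested.exists_isAddress [TopologicalSpace X] [T2Space X] (hnest : IsNested E)
    (hne : ∀ ℓ, (E ℓ).Nonempty) (hcpt : ∀ ℓ, IsCompact (E ℓ)) (ω : ℕ → Fin 2) :
    ∃ x, IsAddress E x ω := by
  obtain ⟨x, hx⟩ := IsCompact.nonempty_iInter_of_sequence_nonempty_isCompact_isClosed
    (fun n => E (node ω n)) (fun n => hnest _ (ω n)) (fun _ => hne _) (hcpt _)
    fun _ => (hcpt _).isClosed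
  exact ⟨x, mem_iInter.1 hx⟩

end Nested

section Separated

variable {X : Type*} [PseudoMetricSpace X] {E : ℕ → Set X} {r c : ℝ}

lemma SiblingsSeparated.le_dist_of_first_ne (hsep : SiblingsSeparated E c r)
    {ω ω' : ℕ → Fin 2} {i : ℕ} (hagree : ∀ j < i, ω j = ω' j) (hne : ω i ≠ ω' i) {x y : X}
    (hx : x ∈ E (node ω (i + 1))) (hy : y ∈ E (node ω' (i + 1))) : c * r ^ i ≤ dist x y := by
  have hm := node_mem_generation ω i
  rw [node] at hx hy
  rw [← node_congr hagree] at hy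
  obtain ⟨h, h'⟩ | ⟨h, h'⟩ : (ω i = 0 ∧ ω' i = 1) ∨ (ω i = 1 ∧ ω' i = 0) := by omega
  · simp only [h, h', Fin.val_zero, Fin.val_one, add_zero] at hx hy
    exact hsep i _ hm x hx y hy
  · simp only [h, h', Fin.val_zero, Fin.val_one, add_zero] at hx hy
    rw [dist_comm]
    exact hsep i _ hm y hy x hx

lemma SiblingsSeparated.eq_of_mem_node (hsep : SiblingsSeparated E c r) (hnest : IsNested E)
    (hc : 0 < c) (hr : 0 < r) {ω ω' : ℕ → Fin 2} {n : ℕ} {x : X} (hx : x ∈ E (node ω n))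
    (hx' : x ∈ E (node ω' n)) {i : ℕ} (hi : i < n) : ω i = ω' i := by
  induction i using Nat.strong_induction_on with
  | _ i ih =>
    by_contra hne
    have := hsep.le_dist_of_first_ne (fun j hj => ih j hj (hj.trans hi)) hne
      (hnest.antitone_node ω hi hx) (hnest.antitone_node ω' hi hx')
    rw [dist_self] at this
    exact (mul_pos hc (pow_pos hr i)).not_ge this

lemma SiblingsSeparated.exists_isAddress (hsep : SiblingsSeparated E c r) (hnest : IsNested E)
    (hc : 0 < c) (hr : 0 < r) {x : X} (hx : x ∈ limitSet E) : ∃ ω, IsAddress E x ω := by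
  have : ∀ n, ∃ ω, x ∈ E (node ω (n + 1)) := fun n => by
    obtain ⟨ℓ, hℓ, hxℓ⟩ := mem_iUnion₂.1 (mem_iInter₂.1 hx (n + 1) n.succ_pos)
    obtain ⟨ω, rfl⟩ := exists_node_eq hℓ
    exact ⟨ω, hxℓ⟩
  choose ω hω using this
  -- digit `i` is taken from the path found at generation `i + 1`; these paths are compatible
  refine ⟨fun i => ω i i, fun n => hnest.antitone_node _ n.le_succ ?_⟩
  show x ∈ E (node _ (n + 1))
  rw [node_congr fun i hi => hsep.eq_of_mem_node hnest hc hr (hω i)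
    (hnest.antitone_node _ (by omega) (hω n)) i.lt_succ_self]
  exact hω n

lemma SiblingsSeparated.isAddress_unique (hsep : SiblingsSeparated E c r) (hnest : IsNested E)
    (hc : 0 < c) (hr : 0 < r) {x : X} {ω ω' : ℕ → Fin 2} (h : IsAddress E x ω)
    (h' : IsAddress E x ω') : ω = ω' :=
  funext fun i => hsep.eq_of_mem_node hnest hc hr (h (i + 1)) (h' (i + 1)) i.lt_succ_self

lemma SiblingsSeparated.abs_ofDigits_sub_le (hsep : SiblingsSeparated E c r) (hc : 0 < c)
    (hr : 0 < r) {s : ℝ≥0} (hrs : r ^ (s : ℝ) = 1 / 2) {x y : X} {ω ω' : ℕ → Fin 2}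
    (hx : IsAddress E x ω) (hy : IsAddress E y ω') :
    |Real.ofDigits ω - Real.ofDigits ω'| ≤ c ^ (-(s : ℝ)) * dist x y ^ (s : ℝ) := by
  classical
  by_cases h : ∃ i, ω i ≠ ω' i
  swap
  · simp only [not_exists, not_not] at h
    rw [funext h, sub_self, abs_zero]
    positivity
  have hagree : ∀ j < Nat.find h, ω j = ω' j := fun j hj => not_not.1 (Nat.find_min h hj)
  have hdist := hsep.le_dist_of_first_ne hagree (Nat.find_spec h) (hx _) (hy _)
  calc |Real.ofDigits ω - Real.ofDigits ω'| ≤ ((2 : ℝ) ^ Nat.find h)⁻¹ := by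
        exact_mod_cast Real.abs_ofDigits_sub_ofDigits_le hagree
    _ = c ^ (-(s : ℝ)) * (c * r ^ Nat.find h) ^ (s : ℝ) := by
        rw [Real.mul_rpow hc.le (by positivity), ← Real.rpow_pow_comm hr.le, hrs,
          ← mul_assoc, Real.rpow_neg hc.le, inv_mul_cancel₀ (by positivity), one_mul, one_div,
          inv_pow]
    _ ≤ c ^ (-(s : ℝ)) * dist x y ^ (s : ℝ) := by gcongr

end Separated

lemma pos_of_rpow_eq_half {r : ℝ} {s : ℝ≥0} (hrs : r ^ (s : ℝ) = 1 / 2) : 0 < s := by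
  refine pos_iff_ne_zero.2 fun h => ?_
  rw [h, NNReal.coe_zero, Real.rpow_zero] at hrs
  norm_num at hrs

lemma lt_one_of_rpow_eq_half {r : ℝ} {s : ℝ≥0} (hrs : r ^ (s : ℝ) = 1 / 2) : r < 1 := by
  by_contra! h
  have := Real.one_le_rpow h s.coe_nonneg
  rw [hrs] at this
  norm_num at this

theorem le_dimH_limitSet {X : Type*} [MetricSpace X] {E : ℕ → Set X} {r c : ℝ} {s : ℝ≥0}
    (hne : ∀ ℓ, (E ℓ).Nonempty) (hcpt : ∀ ℓ, IsCompact (E ℓ)) (hnest : IsNested E)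
    (hsep : SiblingsSeparated E c r) (hc : 0 < c) (hr : 0 < r) (hrs : r ^ (s : ℝ) = 1 / 2) :
    (s : ℝ≥0∞) ≤ dimH (limitSet E) := by
  choose! ω hω using fun x (hx : x ∈ limitSet E) => hsep.exists_isAddress hnest hc hr hx
  have hholder : HolderOnWith (c ^ (-(s : ℝ))).toNNReal s (fun x => Real.ofDigits (ω x))
      (limitSet E) := by
    intro x hx y hy
    have hK : ((c ^ (-(s : ℝ))).toNNReal : ℝ≥0∞) = ENNReal.ofReal (c ^ (-(s : ℝ))) := rfl
    rw [edist_dist, edist_dist, ENNReal.ofReal_rpow_of_nonneg dist_nonneg s.coe_nonneg, hK,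
      ← ENNReal.ofReal_mul (by positivity)]
    exact ENNReal.ofReal_le_ofReal (hsep.abs_ofDigits_sub_le hc hr hrs (hω x hx) (hω y hy))
  have hsurj : Icc (0 : ℝ) 1 ⊆ (fun x => Real.ofDigits (ω x)) '' limitSet E := by
    intro t ht
    obtain ⟨ω₀, -, rfl⟩ := Real.ofDigits_SurjOn one_lt_two ht
    obtain ⟨x, hx⟩ := hnest.exists_isAddress hne hcpt ω₀
    exact ⟨x, hx.mem_limitSet,
      congrArg _ (hsep.isAddress_unique hnest hc hr (hω x hx.mem_limitSet) hx)⟩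
  have hs := pos_of_rpow_eq_half hrs
  have : (1 : ℝ≥0∞) ≤ dimH (limitSet E) / s :=
    calc (1 : ℝ≥0∞) = dimH (Icc (0 : ℝ) 1) := by
          rw [Real.dimH_of_nonempty_interior (by simp), Module.finrank_self, Nat.cast_one]
      _ ≤ _ := dimH_mono hsurj
      _ ≤ _ := hholder.dimH_image_le hs
  rwa [ENNReal.le_div_iff_mul_le (by simp [hs.ne']) (by simp), one_mul] at this

lemma sum_ediam_rpow_le {X : Type*} [EMetricSpace X] {E : ℕ → Set X} {r C : ℝ} {s : ℝ≥0}
    (hr : 0 ≤ r) (hrs : r ^ (s : ℝ) = 1 / 2)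
    (hdiam : ∀ n, ∀ ℓ ∈ generation n, Metric.ediam (E ℓ) ≤ ENNReal.ofReal (C * r ^ n)) (n : ℕ) :
    ∑ ℓ ∈ generation n, Metric.ediam (E ℓ) ^ (s : ℝ) ≤ ENNReal.ofReal C ^ (s : ℝ) := by
  have hterm : ∀ ℓ ∈ generation n,
      Metric.ediam (E ℓ) ^ (s : ℝ) ≤ ENNReal.ofReal C ^ (s : ℝ) * 2⁻¹ ^ n := fun ℓ hℓ =>
    calc Metric.ediam (E ℓ) ^ (s : ℝ) ≤ ENNReal.ofReal (C * r ^ n) ^ (s : ℝ) := by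
          gcongr; exact hdiam n ℓ hℓ
      _ = ENNReal.ofReal C ^ (s : ℝ) * 2⁻¹ ^ n := by
          rw [ENNReal.ofReal_mul' (by positivity), ENNReal.ofReal_pow hr,
            ENNReal.mul_rpow_of_nonneg _ _ s.coe_nonneg, ← ENNReal.rpow_natCast_mul,
            mul_comm (n : ℝ), ENNReal.rpow_mul_natCast,
            ENNReal.ofReal_rpow_of_nonneg hr s.coe_nonneg, hrs, one_div,
            ENNReal.ofReal_inv_of_pos two_pos, ENNReal.ofReal_ofNat]
  refine (Finset.sum_le_sum hterm).trans_eq ?_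
  rw [Finset.sum_const, card_generation, nsmul_eq_mul, mul_left_comm, Nat.cast_pow,
    Nat.cast_ofNat, ← mul_pow, ENNReal.mul_inv_cancel two_ne_zero ENNReal.ofNat_ne_top,
    one_pow, mul_one]

theorem dimH_limitSet_le {X : Type*} [EMetricSpace X] {E : ℕ → Set X} {r C : ℝ} {s : ℝ≥0}
    (hr : 0 ≤ r) (hrs : r ^ (s : ℝ) = 1 / 2)
    (hdiam : ∀ n, ∀ ℓ ∈ generation n, Metric.ediam (E ℓ) ≤ ENNReal.ofReal (C * r ^ n)) :
    dimH (limitSet E) ≤ s := by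
  borelize X
  refine dimH_le_of_hausdorffMeasure_ne_top (ne_top_of_le_ne_top
    (by finiteness : ENNReal.ofReal C ^ (s : ℝ) ≠ ∞) ?_)
  calc μH[s] (limitSet E)
      ≤ liminf (fun n => ∑ ℓ : generation n, Metric.ediam (E ℓ) ^ (s : ℝ)) atTop := by
        refine Measure.hausdorffMeasure_le_liminf_sum _ _ (fun n => ENNReal.ofReal (C * r ^ n))
          ?_ _ (.of_forall fun n ℓ => hdiam n ℓ ℓ.2) ?_
        · simpa using ENNReal.tendsto_ofReal
            ((tendsto_pow_atTop_nhds_zero_of_lt_one hr (lt_one_of_rpow_eq_half hrs)).const_mul C)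
        · filter_upwards [eventually_ge_atTop 1] with n hn x hx
          obtain ⟨ℓ, hℓ, hxℓ⟩ := mem_iUnion₂.1 (mem_iInter₂.1 hx n hn)
          exact mem_iUnion.2 ⟨⟨ℓ, hℓ⟩, hxℓ⟩
    _ ≤ liminf (fun _ => ENNReal.ofReal C ^ (s : ℝ)) atTop :=
        liminf_le_liminf (.of_forall fun n => by
          rw [Finset.sum_coe_sort (generation n) fun ℓ => Metric.ediam (E ℓ) ^ (s : ℝ)]
          exact sum_ediam_rpow_le hr hrs hdiam n)
    _ = ENNReal.ofReal C ^ (s : ℝ) := liminf_const _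

theorem dimH_limitSet_eq {X : Type*} [MetricSpace X] {E : ℕ → Set X} {r c C : ℝ} {s : ℝ≥0}
    (hne : ∀ ℓ, (E ℓ).Nonempty) (hcpt : ∀ ℓ, IsCompact (E ℓ)) (hnest : IsNested E)
    (hsep : SiblingsSeparated E c r)
    (hdiam : ∀ n, ∀ ℓ ∈ generation n, Metric.ediam (E ℓ) ≤ ENNReal.ofReal (C * r ^ n))
    (hc : 0 < c) (hr : 0 < r) (hrs : r ^ (s : ℝ) = 1 / 2) :
    dimH (limitSet E) = s :=
  le_antisymm (dimH_limitSet_le hr.le hrs hdiam) (le_dimH_limitSet hne hcpt hnest hsep hc hr hrs)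

noncomputable def ratio₁ (ℓ : ℕ) : ℝ := (ℓ + 1) / (4 * ℓ + 6)

noncomputable def ratio₂ (ℓ : ℕ) : ℝ := (2 * ℓ + 5) / (8 * ℓ + 16)

lemma ratio₁_mem_Icc (ℓ : ℕ) : ratio₁ ℓ ∈ Icc 0 (1 / 4) :=
  ⟨by unfold ratio₁; positivity, by rw [ratio₁, div_le_iff₀ (by positivity)]; linarith⟩

lemma ratio₂_mem_Icc (ℓ : ℕ) : ratio₂ ℓ ∈ Icc 0 (5 / 16) :=
  ⟨by unfold ratio₂; positivity, by rw [ratio₂, div_le_iff₀ (by positivity)]; linarith⟩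

/-- For `ℓ` in generation `n`, `4ⁿ (b ℓ - a ℓ)` stays between `lowerEnvelope ℓ` and
`upperEnvelope ℓ`, which lie in `[1/3, 2]`. Constant bounds would not be preserved by the recursion,
since `ratio₁ 0 = 1/6 < 1/4 < 5/16 = ratio₂ 0`. -/
noncomputable def lowerEnvelope (x : ℝ) : ℝ := (x + 3) / (3 * (x + 1))

noncomputable def upperEnvelope (x : ℝ) : ℝ := 2 * (x + 1) / (x + 2)

lemma lowerEnvelope_left (ℓ : ℕ) :
    lowerEnvelope ↑(2 * ℓ + 1) ≤ 4 * ratio₁ ℓ * lowerEnvelope ℓ := by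
  unfold lowerEnvelope ratio₁
  push_cast
  rw [div_le_iff₀ (by positivity)]
  field_simp
  nlinarith

lemma upperEnvelope_left (ℓ : ℕ) :
    4 * ratio₁ ℓ * upperEnvelope ℓ ≤ upperEnvelope ↑(2 * ℓ + 1) := by
  unfold upperEnvelope ratio₁
  push_cast
  rw [le_div_iff₀ (by positivity)]
  field_simp
  nlinarith

lemma lowerEnvelope_right (ℓ : ℕ) :
    lowerEnvelope ↑(2 * ℓ + 2) ≤ 4 * ratio₂ ℓ * lowerEnvelope ℓ := by
  unfold lowerEnvelope ratio₂
  push_cast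
  rw [div_le_iff₀ (by positivity)]
  field_simp
  nlinarith

lemma upperEnvelope_right (ℓ : ℕ) :
    4 * ratio₂ ℓ * upperEnvelope ℓ ≤ upperEnvelope ↑(2 * ℓ + 2) := by
  unfold upperEnvelope ratio₂
  push_cast
  rw [le_div_iff₀ (by positivity)]
  field_simp
  nlinarith

structure IsCantorConstruction (k₁ k₂ a b : ℕ → ℝ) : Prop where
  a_zero : a 0 = 0
  b_zero : b 0 = 1
  a_left : ∀ ℓ, a (2 * ℓ + 1) = a ℓ
  b_left : ∀ ℓ, b (2 * ℓ + 1) = a ℓ + k₁ ℓ * (b ℓ - a ℓ)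
  a_right : ∀ ℓ, a (2 * ℓ + 2) = b ℓ - k₂ ℓ * (b ℓ - a ℓ)
  b_right : ∀ ℓ, b (2 * ℓ + 2) = b ℓ

namespace IsCantorConstruction

variable {k₁ k₂ a b : ℕ → ℝ}

lemma length_left (h : IsCantorConstruction k₁ k₂ a b) (ℓ : ℕ) :
    b (2 * ℓ + 1) - a (2 * ℓ + 1) = k₁ ℓ * (b ℓ - a ℓ) := by
  rw [h.a_left, h.b_left]
  ring

lemma length_right (h : IsCantorConstruction k₁ k₂ a b) (ℓ : ℕ) :
    b (2 * ℓ + 2) - a (2 * ℓ + 2) = k₂ ℓ * (b ℓ - a ℓ) := by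
  rw [h.a_right, h.b_right]
  ring

lemma gap_eq (h : IsCantorConstruction k₁ k₂ a b) (ℓ : ℕ) :
    a (2 * ℓ + 2) - b (2 * ℓ + 1) = (1 - k₁ ℓ - k₂ ℓ) * (b ℓ - a ℓ) := by
  rw [h.a_right, h.b_left]
  ring

lemma isNested (h : IsCantorConstruction k₁ k₂ a b) (hk₁ : ∀ ℓ, k₁ ℓ ∈ Icc 0 1)
    (hk₂ : ∀ ℓ, k₂ ℓ ∈ Icc 0 1) (hab : ∀ ℓ, a ℓ ≤ b ℓ) :
    IsNested fun ℓ => Icc (a ℓ) (b ℓ) := by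
  intro ℓ d
  have hL := sub_nonneg.2 (hab ℓ)
  obtain ⟨h₁, h₁'⟩ := hk₁ ℓ
  obtain ⟨h₂, h₂'⟩ := hk₂ ℓ
  obtain rfl | rfl : d = 0 ∨ d = 1 := by omega
  · refine Icc_subset_Icc (h.a_left ℓ).ge ?_
    rw [Fin.val_zero, add_zero, h.b_left]
    nlinarith
  · refine Icc_subset_Icc ?_ (h.b_right ℓ).le
    rw [Fin.val_one, h.a_right]
    nlinarith


lemma length_mem_envelope (h : IsCantorConstruction ratio₁ ratio₂ a b) (ω : ℕ → Fin 2)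
    (n : ℕ) : 4 ^ n * (b (node ω n) - a (node ω n)) ∈
      Icc (lowerEnvelope (node ω n)) (upperEnvelope (node ω n)) := by
  induction n with
  | zero => norm_num [node, h.a_zero, h.b_zero, lowerEnvelope, upperEnvelope]
  | succ n ih =>
    set m := node ω n
    have hpow : (4 : ℝ) ^ (n + 1) = 4 * 4 ^ n := pow_succ' 4 n
    rcases node_succ_eq_or ω n with hnode | hnode <;> rw [hnode]
    · have hk : 0 ≤ 4 * ratio₁ m := by linarith [(ratio₁_mem_Icc m).1]
      rw [h.length_left, hpow, mul_mul_mul_comm]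
      exact ⟨(lowerEnvelope_left m).trans (mul_le_mul_of_nonneg_left ih.1 hk),
        (mul_le_mul_of_nonneg_left ih.2 hk).trans (upperEnvelope_left m)⟩
    · have hk : 0 ≤ 4 * ratio₂ m := by linarith [(ratio₂_mem_Icc m).1]
      rw [h.length_right, hpow, mul_mul_mul_comm]
      exact ⟨(lowerEnvelope_right m).trans (mul_le_mul_of_nonneg_left ih.1 hk),
        (mul_le_mul_of_nonneg_left ih.2 hk).trans (upperEnvelope_right m)⟩

lemma length_mem_Icc (h : IsCantorConstruction ratio₁ ratio₂ a b) {n ℓ : ℕ}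
    (hℓ : ℓ ∈ generation n) : b ℓ - a ℓ ∈ Icc (1 / 3 * (1 / 4) ^ n) (2 * (1 / 4) ^ n) := by
  obtain ⟨ω, rfl⟩ := exists_node_eq hℓ
  obtain ⟨hlo, hhi⟩ := h.length_mem_envelope ω n
  have hx : (0 : ℝ) ≤ node ω n := Nat.cast_nonneg _
  have h₁ : 1 / 3 ≤ lowerEnvelope (node ω n) := by
    rw [lowerEnvelope, le_div_iff₀ (by positivity)]
    linarith
  have h₂ : upperEnvelope (node ω n) ≤ 2 := by
    rw [upperEnvelope, div_le_iff₀ (by positivity)]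
    linarith
  simp only [one_div, inv_pow, mem_Icc]
  constructor
  · rw [← div_eq_mul_inv, div_le_iff₀ (by positivity)]
    linarith
  · rw [← div_eq_mul_inv, le_div_iff₀ (by positivity)]
    linarith

lemma a_le_b (h : IsCantorConstruction ratio₁ ratio₂ a b) (ℓ : ℕ) : a ℓ ≤ b ℓ := by
  obtain ⟨n, hn⟩ := exists_mem_generation ℓ
  have := (h.length_mem_Icc hn).1
  have : (0 : ℝ) ≤ 1 / 3 * (1 / 4) ^ n := by positivity
  linarith

lemma siblingsSeparated (h : IsCantorConstruction ratio₁ ratio₂ a b) :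
    SiblingsSeparated (fun ℓ => Icc (a ℓ) (b ℓ)) (7 / 48) (1 / 4) := by
  intro n ℓ hℓ x hx y hy
  have hL := (h.length_mem_Icc hℓ).1
  have hgap : 7 / 16 * (b ℓ - a ℓ) ≤ a (2 * ℓ + 2) - b (2 * ℓ + 1) := by
    rw [h.gap_eq]
    have := (ratio₁_mem_Icc ℓ).2
    have := (ratio₂_mem_Icc ℓ).2
    nlinarith [sub_nonneg.2 (h.a_le_b ℓ)]
  rw [Real.dist_eq, abs_sub_comm]
  refine le_trans ?_ (le_abs_self _)
  linarith [hx.2, hy.1]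

lemma ediam_le (h : IsCantorConstruction ratio₁ ratio₂ a b) {n ℓ : ℕ} (hℓ : ℓ ∈ generation n) :
    Metric.ediam (Icc (a ℓ) (b ℓ)) ≤ ENNReal.ofReal (2 * (1 / 4) ^ n) := by
  rw [Real.ediam_Icc]
  exact ENNReal.ofReal_le_ofReal (h.length_mem_Icc hℓ).2

end IsCantorConstruction

end CantorScheme

open CantorScheme

/-- Example 5.1: the Cantor-type construction driven by
`k_ℓ = ((ℓ+1)/(4ℓ+6), (2ℓ+5)/(8ℓ+16))` produces a limit set of Hausdorff dimension `1/2`. -/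
theorem stmt_15
    (k1 k2 : ℕ → ℝ)
    (hk1 : ∀ ℓ : ℕ, k1 ℓ = ((ℓ : ℝ) + 1) / (4 * (ℓ : ℝ) + 6))
    (hk2 : ∀ ℓ : ℕ, k2 ℓ = (2 * (ℓ : ℝ) + 5) / (8 * (ℓ : ℝ) + 16))
    (a b : ℕ → ℝ)
    (ha0 : a 0 = 0) (hb0 : b 0 = 1)
    (haL : ∀ ℓ : ℕ, a (2 * ℓ + 1) = a ℓ)
    (hbL : ∀ ℓ : ℕ, b (2 * ℓ + 1) = a ℓ + k1 ℓ * (b ℓ - a ℓ))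
    (haR : ∀ ℓ : ℕ, a (2 * ℓ + 2) = b ℓ - k2 ℓ * (b ℓ - a ℓ))
    (hbR : ∀ ℓ : ℕ, b (2 * ℓ + 2) = b ℓ)
    (F : Set ℝ)
    (hF : F = ⋂ (n : ℕ) (_ : 1 ≤ n),
      ⋃ ℓ ∈ Finset.Icc (2 ^ n - 1) (2 ^ (n + 1) - 2), Set.Icc (a ℓ) (b ℓ)) :
    dimH F = 1 / 2 := by
  obtain rfl : k1 = ratio₁ := funext hk1
  obtain rfl : k2 = ratio₂ := funext hk2
  have h : IsCantorConstruction ratio₁ ratio₂ a b := ⟨ha0, hb0, haL, hbL, haR, hbR⟩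
  have hnest := h.isNested (fun ℓ => Set.Icc_subset_Icc_right (by norm_num) (ratio₁_mem_Icc ℓ))
    (fun ℓ => Set.Icc_subset_Icc_right (by norm_num) (ratio₂_mem_Icc ℓ)) h.a_le_b
  have hhalf : (1 / 4 : ℝ) ^ ((1 / 2 : ℝ≥0) : ℝ) = 1 / 2 := by
    rw [show ((1 / 2 : ℝ≥0) : ℝ) = 1 / 2 by norm_num, ← Real.sqrt_eq_rpow,
      Real.sqrt_eq_iff_mul_self_eq] <;> norm_num
  subst hF
  refine (dimH_limitSet_eq (fun ℓ => Set.nonempty_Icc.2 (h.a_le_b ℓ)) (fun _ => isCompact_Icc)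
    hnest h.siblingsSeparated (fun _ _ => h.ediam_le) (by norm_num) (by norm_num) hhalf).trans ?_
  norm_num
end

section
/- Let {q_ℓ}_{ℓ≥0} be any sequence of real numbers with 1/8 ≤ q_ℓ ≤ 3/8 for all ℓ, and let the Cantor-type construction be driven by the sequence k_ℓ = (q_ℓ, 1/2 − q_ℓ). Then the resulting limit set F ⊆ [0,1] satisfies 1/3 ≤ dim_H(F) ≤ log(2)/log(8/3). -/
/-!
Upper bound: the `2 ^ n` intervals of generation `n` have length at most `(3/8) ^ n`, and
`2 * (3/8) ^ d = 1` for `d = log 2 / log (8/3)`, so `μH[d] F ≤ 1`.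

Lower bound: since `k⁽¹⁾ + k⁽²⁾ = 1/2`, the two children of an interval of length `L` are `L/2`
apart, and intervals of generation `n` have length at least `(1/8) ^ n`. Hence the map sending the
point of `F` with binary address `c₁ c₂ …` to `∑ cᵢ 2⁻ⁱ` is `1/3`-Hölder, and it maps `F` onto
`[0, 1]`, so `1 ≤ 3 dim_H F`.
-/

open Set Filter Topology MeasureTheory Module
open scoped NNReal ENNReal

theorem dimH_le_of_forall_cover {X : Type*} [EMetricSpace X] {F : Set X} {ι : ℕ → Type*}
    [∀ n, Fintype (ι n)] (E : ∀ n, ι n → Set X) (hcover : ∀ n, F ⊆ ⋃ i, E n i)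
    {N : ℕ} (hcard : ∀ n, Fintype.card (ι n) ≤ N ^ n) {r : ℝ} (hr₀ : 0 ≤ r) (hr₁ : r < 1)
    (hdiam : ∀ n i, Metric.ediam (E n i) ≤ ENNReal.ofReal (r ^ n))
    {d : ℝ} (hd : 0 ≤ d) (hNr : N * r ^ d ≤ 1) :
    dimH F ≤ ENNReal.ofReal d := by
  have hsum : ∀ n, ∑ i, Metric.ediam (E n i) ^ d ≤ 1 := fun n =>
    calc ∑ i, Metric.ediam (E n i) ^ d
        ≤ ∑ _i : ι n, ENNReal.ofReal (r ^ n) ^ d := by gcongr with i; exact hdiam n i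
      _ ≤ (N : ℝ≥0∞) ^ n * ENNReal.ofReal (r ^ d) ^ n := by
        rw [Finset.sum_const, Finset.card_univ, nsmul_eq_mul, ENNReal.ofReal_rpow_of_nonneg
          (by positivity) hd, ← Real.rpow_natCast, ← Real.rpow_mul hr₀, mul_comm (n : ℝ),
          Real.rpow_mul hr₀, Real.rpow_natCast, ENNReal.ofReal_pow (by positivity)]
        gcongr
        exact_mod_cast hcard n
      _ ≤ 1 := by
        rw [← mul_pow, ← ENNReal.ofReal_natCast, ← ENNReal.ofReal_mul (by positivity)]
        exact pow_le_one₀ zero_le (ENNReal.ofReal_le_one.2 hNr)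
  borelize X
  have hr : Tendsto (fun n : ℕ => ENNReal.ofReal (r ^ n)) atTop (𝓝 0) := by
    simpa using ENNReal.tendsto_ofReal (tendsto_pow_atTop_nhds_zero_of_lt_one hr₀ hr₁)
  have hμ : μH[d] F ≤ 1 :=
    (Measure.hausdorffMeasure_le_liminf_sum d F _ hr E (.of_forall hdiam)
      (.of_forall hcover)).trans (liminf_le_of_frequently_le' (.of_forall hsum))
  rw [ENNReal.ofReal]
  refine dimH_le_of_hausdorffMeasure_ne_top ?_
  rw [Real.coe_toNNReal d hd]
  exact ne_top_of_le_ne_top ENNReal.one_ne_top hμ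

theorem HolderOnWith.le_dimH_of_subset_image {X E : Type*} [EMetricSpace X]
    [NormedAddCommGroup E] [NormedSpace ℝ E] [FiniteDimensional ℝ E] {C r : ℝ≥0} {f : X → E}
    {s : Set X} {t : Set E} (hf : HolderOnWith C r f s) (hr : 0 < r) (ht : (interior t).Nonempty)
    (hts : t ⊆ f '' s) : finrank ℝ E * (r : ℝ≥0∞) ≤ dimH s := by
  refine (ENNReal.le_div_iff_mul_le (.inl (by exact_mod_cast hr.ne'))
    (.inl ENNReal.coe_ne_top)).1 ?_
  calc (finrank ℝ E : ℝ≥0∞) = dimH t := (Real.dimH_of_nonempty_interior ht).symm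
    _ ≤ dimH (f '' s) := dimH_mono hts
    _ ≤ dimH s / r := hf.dimH_image_le hr

namespace CantorConstruction

/-- An address lists the left (`false`) / right (`true`) choices from the last generation back to
the first; `nodeIndex` numbers the nodes as `E_ℓ` does, the children of `ℓ` being `2ℓ+1`, `2ℓ+2`. -/
def nodeIndex : List Bool → ℕ
  | [] => 0
  | c :: s => 2 * nodeIndex s + if c then 2 else 1

theorem nodeIndex_mem_Icc (s : List Bool) :
    nodeIndex s ∈ Finset.Icc (2 ^ s.length - 1) (2 ^ (s.length + 1) - 2) := by
  induction s with
  | nil => simp [nodeIndex]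
  | cons c s ih =>
    have := Nat.one_le_two_pow (n := s.length)
    simp only [Finset.mem_Icc, List.length_cons, pow_succ] at ih ⊢
    cases c <;> simp only [nodeIndex, Bool.false_eq_true, if_true, if_false] <;> omega

theorem exists_nodeIndex_eq {n ℓ : ℕ} (hℓ : ℓ ∈ Finset.Icc (2 ^ n - 1) (2 ^ (n + 1) - 2)) :
    ∃ s : List Bool, s.length = n ∧ nodeIndex s = ℓ := by
  induction n generalizing ℓ with
  | zero => exact ⟨[], rfl, by simp_all [nodeIndex]⟩
  | succ n ih =>
    have := Nat.one_le_two_pow (n := n)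
    simp only [Finset.mem_Icc, pow_succ] at hℓ ih
    obtain ⟨m, rfl | rfl⟩ := Nat.even_or_odd' ℓ
    · obtain ⟨s, hs, hm⟩ := ih (ℓ := m - 1) (by omega)
      exact ⟨true :: s, by simp [hs], by simp [nodeIndex, hm]; omega⟩
    · obtain ⟨s, hs, hm⟩ := ih (ℓ := m) (by omega)
      exact ⟨false :: s, by simp [hs], by simp [nodeIndex, hm]⟩

noncomputable def dyadicLeft : List Bool → ℝ
  | [] => 0
  | c :: s => dyadicLeft s + if c then (1 / 2) ^ (s.length + 1) else 0

noncomputable def dyadicRight (s : List Bool) : ℝ := dyadicLeft s + (1 / 2) ^ s.length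

theorem dyadicRight_sub_dyadicLeft (s : List Bool) :
    dyadicRight s - dyadicLeft s = (1 / 2) ^ s.length := by
  rw [dyadicRight, add_sub_cancel_left]

theorem dyadicLeft_le_dyadicRight (s : List Bool) : dyadicLeft s ≤ dyadicRight s :=
  le_add_of_nonneg_right (by positivity)

theorem dyadicLeft_le_cons (c : Bool) (s : List Bool) : dyadicLeft s ≤ dyadicLeft (c :: s) :=
  le_add_of_nonneg_right (by positivity)

theorem dyadicRight_cons_le (c : Bool) (s : List Bool) : dyadicRight (c :: s) ≤ dyadicRight s := by
  have := pow_pos (by norm_num : (0 : ℝ) < 1 / 2) s.length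
  cases c <;> simp only [dyadicRight, dyadicLeft, List.length_cons, pow_succ, Bool.false_eq_true,
    if_true, if_false] <;> linarith

theorem dyadicLeft_le_of_suffix {s t : List Bool} (h : t <:+ s) : dyadicLeft t ≤ dyadicLeft s := by
  obtain ⟨u, rfl⟩ := h
  induction u with
  | nil => rfl
  | cons c u ih => exact ih.trans (dyadicLeft_le_cons c _)

theorem dyadicRight_le_of_suffix {s t : List Bool} (h : t <:+ s) :
    dyadicRight s ≤ dyadicRight t := by
  obtain ⟨u, rfl⟩ := h
  induction u with
  | nil => rfl
  | cons c u ih => exact (dyadicRight_cons_le c _).trans ih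

theorem dyadicLeft_le_one (s : List Bool) : dyadicLeft s ≤ 1 := by
  simpa [dyadicRight, dyadicLeft] using
    (dyadicLeft_le_dyadicRight s).trans (dyadicRight_le_of_suffix List.nil_suffix)

noncomputable def binaryDigits (t : ℝ) : ℕ → List Bool
  | 0 => []
  | n + 1 => decide (dyadicLeft (binaryDigits t n) + (1 / 2) ^ (n + 1) ≤ t) :: binaryDigits t n

theorem length_binaryDigits (t : ℝ) (n : ℕ) : (binaryDigits t n).length = n := by
  induction n with
  | zero => rfl
  | succ n ih => simp [binaryDigits, ih]

theorem binaryDigits_suffix (t : ℝ) {m n : ℕ} (h : m ≤ n) :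
    binaryDigits t m <:+ binaryDigits t n := by
  induction n, h using Nat.le_induction with
  | base => exact List.suffix_refl _
  | succ n _ ih => exact ih.trans (List.suffix_cons _ _)

theorem mem_Icc_binaryDigits {t : ℝ} (ht : t ∈ Icc 0 1) (n : ℕ) :
    t ∈ Icc (dyadicLeft (binaryDigits t n)) (dyadicRight (binaryDigits t n)) := by
  induction n with
  | zero => simpa [binaryDigits, dyadicLeft, dyadicRight] using ht
  | succ n ih =>
    have hlen := length_binaryDigits t n
    by_cases h : dyadicLeft (binaryDigits t n) + (1 / 2) ^ (n + 1) ≤ t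
    · simp only [binaryDigits, h, decide_true, dyadicRight, dyadicLeft, if_true, hlen,
        List.length_cons]
      refine ⟨h, ?_⟩
      have := ih.2
      rw [dyadicRight, hlen] at this
      linarith [pow_succ (1 / 2 : ℝ) n]
    · simp only [binaryDigits, h, decide_false, dyadicRight, dyadicLeft, Bool.false_eq_true,
        if_false, add_zero, hlen, List.length_cons]
      exact ⟨ih.1, (not_le.1 h).le⟩

theorem three_eighths_rpow_log_two_div_log :
    (3 / 8 : ℝ) ^ (Real.log 2 / Real.log (8 / 3)) = 1 / 2 := by
  have hlog : Real.log (8 / 3) ≠ 0 := (Real.log_pos (by norm_num)).ne'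
  rw [Real.rpow_def_of_pos (by norm_num), show (3 / 8 : ℝ) = (8 / 3)⁻¹ by norm_num, Real.log_inv,
    neg_mul, mul_div_cancel₀ _ hlog, Real.exp_neg, Real.exp_log two_pos, one_div]

structure Data where
  q : ℕ → ℝ
  a : ℕ → ℝ
  b : ℕ → ℝ
  hq : ∀ ℓ, 1 / 8 ≤ q ℓ ∧ q ℓ ≤ 3 / 8
  ha0 : a 0 = 0
  hb0 : b 0 = 1
  haL : ∀ ℓ, a (2 * ℓ + 1) = a ℓ
  hbL : ∀ ℓ, b (2 * ℓ + 1) = a ℓ + q ℓ * (b ℓ - a ℓ)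
  haR : ∀ ℓ, a (2 * ℓ + 2) = b ℓ - (1 / 2 - q ℓ) * (b ℓ - a ℓ)
  hbR : ∀ ℓ, b (2 * ℓ + 2) = b ℓ

namespace Data

variable (D : Data)

def left (s : List Bool) : ℝ := D.a (nodeIndex s)

def right (s : List Bool) : ℝ := D.b (nodeIndex s)

def width (s : List Bool) : ℝ := D.right s - D.left s

def interval (s : List Bool) : Set ℝ := Icc (D.left s) (D.right s)

def limitSet : Set ℝ :=
  ⋂ (n : ℕ) (_ : 1 ≤ n), ⋃ ℓ ∈ Finset.Icc (2 ^ n - 1) (2 ^ (n + 1) - 2), Icc (D.a ℓ) (D.b ℓ)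

theorem interval_nil : D.interval [] = Icc 0 1 := by
  simp [interval, left, right, nodeIndex, D.ha0, D.hb0]

theorem left_cons_false (s : List Bool) : D.left (false :: s) = D.left s := by
  simp [left, nodeIndex, D.haL]

theorem right_cons_false (s : List Bool) :
    D.right (false :: s) = D.left s + D.q (nodeIndex s) * D.width s := by
  simp [right, left, width, nodeIndex, D.hbL]

theorem left_cons_true (s : List Bool) :
    D.left (true :: s) = D.right s - (1 / 2 - D.q (nodeIndex s)) * D.width s := by
  simp [right, left, width, nodeIndex, D.haR]

theorem right_cons_true (s : List Bool) : D.right (true :: s) = D.right s := by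
  simp [right, nodeIndex, D.hbR]

theorem exists_width_cons (c : Bool) (s : List Bool) :
    ∃ k ∈ Icc (1 / 8 : ℝ) (3 / 8), D.width (c :: s) = k * D.width s := by
  obtain ⟨h₁, h₂⟩ := D.hq (nodeIndex s)
  cases c
  · refine ⟨D.q (nodeIndex s), ⟨h₁, h₂⟩, ?_⟩
    rw [width, right_cons_false, left_cons_false]; ring
  · refine ⟨1 / 2 - D.q (nodeIndex s), ⟨by linarith, by linarith⟩, ?_⟩
    rw [width, right_cons_true, left_cons_true]; ring

theorem width_mem_Icc (s : List Bool) :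
    D.width s ∈ Icc ((1 / 8 : ℝ) ^ s.length) ((3 / 8) ^ s.length) := by
  induction s with
  | nil => simp [width, left, right, nodeIndex, D.ha0, D.hb0]
  | cons c s ih =>
    obtain ⟨k, ⟨hk₁, hk₂⟩, hw⟩ := D.exists_width_cons c s
    rw [hw, List.length_cons, pow_succ', pow_succ']
    exact ⟨mul_le_mul hk₁ ih.1 (by positivity) (by linarith),
      mul_le_mul hk₂ ih.2 (by linarith [ih.1, pow_pos (by norm_num : (0 : ℝ) < 1 / 8) s.length])
        (by norm_num)⟩

theorem width_pos (s : List Bool) : 0 < D.width s :=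
  (pow_pos (by norm_num) _).trans_le (D.width_mem_Icc s).1

theorem left_le_right (s : List Bool) : D.left s ≤ D.right s :=
  sub_nonneg.1 (D.width_pos s).le

theorem interval_cons_subset (c : Bool) (s : List Bool) : D.interval (c :: s) ⊆ D.interval s := by
  obtain ⟨h₁, h₂⟩ := D.hq (nodeIndex s)
  have hw := D.width_pos s
  apply Icc_subset_Icc
  · cases c
    · rw [left_cons_false]
    · rw [left_cons_true, width] at *; nlinarith
  · cases c
    · rw [right_cons_false, width] at *; nlinarith
    · rw [right_cons_true]

theorem interval_subset_of_suffix {s t : List Bool} (h : t <:+ s) :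
    D.interval s ⊆ D.interval t := by
  obtain ⟨u, rfl⟩ := h
  induction u with
  | nil => rfl
  | cons c u ih => exact (D.interval_cons_subset c _).trans ih

theorem half_width_le_dist {c d : Bool} (hcd : c ≠ d) {s : List Bool} {x y : ℝ}
    (hx : x ∈ D.interval (c :: s)) (hy : y ∈ D.interval (d :: s)) : D.width s / 2 ≤ dist x y := by
  have hgap : D.right (false :: s) + D.width s / 2 = D.left (true :: s) := by
    rw [right_cons_false, left_cons_true, width]; ring
  have := D.width_pos s
  cases c <;> cases d <;> simp only [ne_eq, not_true_eq_false] at hcd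
  · rw [dist_comm, Real.dist_eq, abs_of_nonneg (by linarith [hx.2, hy.1])]; linarith [hx.2, hy.1]
  · rw [Real.dist_eq, abs_of_nonneg (by linarith [hx.1, hy.2])]; linarith [hx.1, hy.2]

theorem eq_of_mem_interval {s t : List Bool} (hlen : s.length = t.length) {x : ℝ}
    (hs : x ∈ D.interval s) (ht : x ∈ D.interval t) : s = t := by
  induction s generalizing t with
  | nil => exact (List.length_eq_zero_iff.1 hlen.symm).symm
  | cons c s ih =>
    obtain _ | ⟨d, t⟩ := t
    · simp at hlen
    have hst : s = t := ih (by simpa using hlen) (D.interval_cons_subset c s hs)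
      (D.interval_cons_subset d t ht)
    subst hst
    by_contra hcd
    have := D.half_width_le_dist (fun h => hcd (by rw [h])) hs ht
    rw [dist_self] at this
    linarith [D.width_pos s]

theorem suffix_of_mem_interval {s t : List Bool} (hlen : t.length ≤ s.length) {x : ℝ}
    (hs : x ∈ D.interval s) (ht : x ∈ D.interval t) : t <:+ s := by
  have hsuf := List.drop_suffix (s.length - t.length) s
  have hdrop := D.eq_of_mem_interval (by simp; omega) (D.interval_subset_of_suffix hsuf hs) ht
  exact hdrop ▸ hsuf

theorem mem_limitSet_iff {x : ℝ} :
    x ∈ D.limitSet ↔ ∀ n, ∃ s : List Bool, s.length = n ∧ x ∈ D.interval s := by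
  simp only [limitSet, mem_iInter, mem_iUnion, exists_prop]
  constructor
  · intro hx n
    obtain ⟨ℓ, hℓ, hxℓ⟩ := hx (n + 1) (by omega)
    obtain ⟨_ | ⟨c, s⟩, hs, rfl⟩ := exists_nodeIndex_eq hℓ
    · simp at hs
    exact ⟨s, by simpa using hs, D.interval_cons_subset c s hxℓ⟩
  · intro hx n _
    obtain ⟨s, rfl, hxs⟩ := hx n
    exact ⟨nodeIndex s, nodeIndex_mem_Icc s, hxs⟩

theorem limitSet_subset_Icc : D.limitSet ⊆ Icc 0 1 := fun x hx => by
  obtain ⟨s, hs, hxs⟩ := D.mem_limitSet_iff.1 hx 0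
  rwa [List.length_eq_zero_iff.1 hs, interval_nil] at hxs

/-- For `x` in the limit set, the point of `[0, 1]` with the same binary address as `x`. -/
noncomputable def code (x : ℝ) : ℝ := sSup (dyadicLeft '' {s | x ∈ D.interval s})

theorem code_mem_Icc {s : List Bool} {x : ℝ} (hx : x ∈ D.interval s) :
    D.code x ∈ Icc (dyadicLeft s) (dyadicRight s) := by
  refine ⟨le_csSup ⟨1, ?_⟩ ⟨s, hx, rfl⟩, csSup_le ⟨_, s, hx, rfl⟩ ?_⟩
  · rintro _ ⟨t, -, rfl⟩
    exact dyadicLeft_le_one t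
  · rintro _ ⟨t, ht, rfl⟩
    rcases le_total t.length s.length with h | h
    · exact (dyadicLeft_le_of_suffix (D.suffix_of_mem_interval h hx ht)).trans
        (dyadicLeft_le_dyadicRight s)
    · exact (dyadicLeft_le_dyadicRight t).trans
        (dyadicRight_le_of_suffix (D.suffix_of_mem_interval h ht hx))

theorem dist_code_le {s : List Bool} {x y : ℝ} (hx : x ∈ D.interval s) (hy : y ∈ D.interval s) :
    dist (D.code x) (D.code y) ≤ (1 / 2) ^ s.length :=
  (Real.dist_le_of_mem_Icc (D.code_mem_Icc hx) (D.code_mem_Icc hy)).trans_eq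
    (dyadicRight_sub_dyadicLeft s)

theorem exists_common_interval {x y : ℝ} (hx : x ∈ D.limitSet) (hy : y ∈ D.limitSet) {n : ℕ}
    (hxy : dist x y ≤ (1 / 8) ^ n) :
    ∃ s : List Bool, s.length = n ∧ x ∈ D.interval s ∧ y ∈ D.interval s := by
  induction n with
  | zero => exact ⟨[], rfl, by rw [interval_nil]; exact D.limitSet_subset_Icc hx,
      by rw [interval_nil]; exact D.limitSet_subset_Icc hy⟩
  | succ n ih =>
    obtain ⟨s, hs, hxs, hys⟩ := ih (hxy.trans (pow_le_pow_of_le_one (by norm_num) (by norm_num)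
      n.le_succ))
    obtain ⟨_ | ⟨c, s₁⟩, hs₁, hx₁⟩ := D.mem_limitSet_iff.1 hx (n + 1)
    · simp at hs₁
    obtain ⟨_ | ⟨d, s₂⟩, hs₂, hy₂⟩ := D.mem_limitSet_iff.1 hy (n + 1)
    · simp at hs₂
    have h₁ : s₁ = s := D.eq_of_mem_interval (by simp_all) (D.interval_cons_subset c s₁ hx₁) hxs
    have h₂ : s₂ = s := D.eq_of_mem_interval (by simp_all) (D.interval_cons_subset d s₂ hy₂) hys
    rw [h₁] at hs₁ hx₁
    rw [h₂] at hy₂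
    by_cases hcd : c = d
    · exact ⟨c :: s, hs₁, hx₁, hcd ▸ hy₂⟩
    -- otherwise `x` and `y` lie in different children of `s`, at distance `≥ (1/8)^n / 2`
    have := D.half_width_le_dist hcd hx₁ hy₂
    have := (D.width_mem_Icc s).1
    rw [pow_succ, hs] at *
    linarith [pow_pos (by norm_num : (0 : ℝ) < 1 / 8) n]

theorem dist_code_le_rpow {x y : ℝ} (hx : x ∈ D.limitSet) (hy : y ∈ D.limitSet) :
    dist (D.code x) (D.code y) ≤ 2 * dist x y ^ (1 / 3 : ℝ) := by
  rcases eq_or_ne x y with rfl | hxy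
  · simp
  obtain ⟨n, hlt, hle⟩ := exists_nat_pow_near_of_lt_one (dist_pos.2 hxy)
    (Real.dist_le_of_mem_Icc_01 (D.limitSet_subset_Icc hx) (D.limitSet_subset_Icc hy))
    (by norm_num : (0 : ℝ) < 1 / 8) (by norm_num)
  obtain ⟨s, rfl, hxs, hys⟩ := D.exists_common_interval hx hy hle
  have hcube : (((1 : ℝ) / 8) ^ (s.length + 1)) ^ (1 / 3 : ℝ) = (1 / 2) ^ (s.length + 1) := by
    rw [show (1 / 8 : ℝ) = (1 / 2) ^ 3 by norm_num, ← pow_mul, mul_comm, pow_mul,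
      show (1 / 3 : ℝ) = ((3 : ℕ) : ℝ)⁻¹ by norm_num, Real.pow_rpow_inv_natCast (by positivity)
      (by norm_num)]
  calc dist (D.code x) (D.code y) ≤ (1 / 2) ^ s.length := D.dist_code_le hxs hys
    _ = 2 * (((1 : ℝ) / 8) ^ (s.length + 1)) ^ (1 / 3 : ℝ) := by rw [hcube, pow_succ]; ring
    _ ≤ 2 * dist x y ^ (1 / 3 : ℝ) := by gcongr

theorem holderOnWith_code : HolderOnWith 2 (1 / 3) D.code D.limitSet := by
  intro x hx y hy
  rw [edist_dist, edist_dist]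
  calc ENNReal.ofReal (dist (D.code x) (D.code y))
      ≤ ENNReal.ofReal (2 * dist x y ^ (1 / 3 : ℝ)) :=
        ENNReal.ofReal_le_ofReal (D.dist_code_le_rpow hx hy)
    _ = 2 * ENNReal.ofReal (dist x y) ^ ((1 / 3 : ℝ≥0) : ℝ) := by
      rw [ENNReal.ofReal_mul zero_le_two, ENNReal.ofReal_rpow_of_nonneg dist_nonneg (by positivity)]
      norm_num

theorem surjOn_code : SurjOn D.code D.limitSet (Icc 0 1) := by
  intro t ht
  have hanti : Antitone fun n => Icc (D.left (binaryDigits t n)) (D.right (binaryDigits t n)) :=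
    fun m n h => D.interval_subset_of_suffix (binaryDigits_suffix t h)
  have hx := mem_iInter.1 (ciSup_mem_iInter_Icc_of_antitone_Icc hanti fun n => D.left_le_right _)
  refine ⟨_, D.mem_limitSet_iff.2 fun n => ⟨_, length_binaryDigits t n, hx n⟩,
    eq_of_forall_dist_le fun ε hε => ?_⟩
  obtain ⟨n, hn⟩ := exists_pow_lt_of_lt_one hε (by norm_num : (1 / 2 : ℝ) < 1)
  calc _ ≤ (1 / 2 : ℝ) ^ n := by
        rw [← length_binaryDigits t n, ← dyadicRight_sub_dyadicLeft]
        exact Real.dist_le_of_mem_Icc (D.code_mem_Icc (hx n)) (mem_Icc_binaryDigits ht n)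
    _ ≤ ε := hn.le

theorem dimH_limitSet_le : dimH D.limitSet ≤ ENNReal.ofReal (Real.log 2 / Real.log (8 / 3)) := by
  refine dimH_le_of_forall_cover (ι := List.Vector Bool) (N := 2) (r := 3 / 8)
    (fun _ v => D.interval v.toList) (fun n x hx => ?_) (by simp [card_vector]) (by norm_num)
    (by norm_num) (fun n v => ?_) (div_nonneg (Real.log_nonneg one_le_two) (Real.log_nonneg
    (by norm_num))) (by rw [three_eighths_rpow_log_two_div_log]; norm_num)
  · obtain ⟨s, hs, hxs⟩ := D.mem_limitSet_iff.1 hx n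
    exact mem_iUnion.2 ⟨⟨s, hs⟩, hxs⟩
  · rw [interval, Real.ediam_Icc]
    have := (D.width_mem_Icc v.toList).2
    rw [v.toList_length] at this
    exact ENNReal.ofReal_le_ofReal this

theorem one_third_le_dimH_limitSet : 1 / 3 ≤ dimH D.limitSet := by
  simpa using D.holderOnWith_code.le_dimH_of_subset_image (by norm_num)
    (by rw [interior_Icc]; exact nonempty_Ioo.2 zero_lt_one) D.surjOn_code

end Data

end CantorConstruction

/-- Example 5.2: the Cantor-type construction driven by `k_ℓ = (q_ℓ, 1/2 − q_ℓ)` with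
`1/8 ≤ q_ℓ ≤ 3/8` produces a limit set `F` with `1/3 ≤ dim_H F ≤ log 2 / log(8/3)`. -/
theorem stmt_16
    (q : ℕ → ℝ) (hq : ∀ ℓ : ℕ, 1 / 8 ≤ q ℓ ∧ q ℓ ≤ 3 / 8)
    (k1 k2 : ℕ → ℝ)
    (hk1 : ∀ ℓ : ℕ, k1 ℓ = q ℓ)
    (hk2 : ∀ ℓ : ℕ, k2 ℓ = 1 / 2 - q ℓ)
    (a b : ℕ → ℝ)
    (ha0 : a 0 = 0) (hb0 : b 0 = 1)
    (haL : ∀ ℓ : ℕ, a (2 * ℓ + 1) = a ℓ)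
    (hbL : ∀ ℓ : ℕ, b (2 * ℓ + 1) = a ℓ + k1 ℓ * (b ℓ - a ℓ))
    (haR : ∀ ℓ : ℕ, a (2 * ℓ + 2) = b ℓ - k2 ℓ * (b ℓ - a ℓ))
    (hbR : ∀ ℓ : ℕ, b (2 * ℓ + 2) = b ℓ)
    (F : Set ℝ)
    (hF : F = ⋂ (n : ℕ) (_ : 1 ≤ n),
      ⋃ ℓ ∈ Finset.Icc (2 ^ n - 1) (2 ^ (n + 1) - 2), Set.Icc (a ℓ) (b ℓ)) :
    1 / 3 ≤ dimH F ∧ dimH F ≤ ENNReal.ofReal (Real.log 2 / Real.log (8 / 3)) := by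
  let D : CantorConstruction.Data := ⟨q, a, b, hq, ha0, hb0, haL,
    fun ℓ => by rw [hbL, hk1], fun ℓ => by rw [haR, hk2], hbR⟩
  have hFD : F = D.limitSet := hF
  rw [hFD]
  exact ⟨D.one_third_le_dimH_limitSet, D.dimH_limitSet_le⟩
end

section
/- Let Σ_{n=0}^∞ a_n be a convergent series of positive terms with sum L. Define b_1 = ((3/2)L − a_0)/(2·(3/2)L) and, for n ≥ 2, b_n = ((3/2)L − Σ_{i=0}^{n−1} a_i)/(2((3/2)L − Σ_{i=0}^{n−2} a_i)). Drive the Cantor-type construction by the sequence k_ℓ = (b_n, b_n) whenever 2^{n−1} − 1 ≤ ℓ ≤ 2^n − 2 (n ≥ 1). Then every interval E_ℓ of the n-th generation (i.e., with 2^n − 1 ≤ ℓ ≤ 2^{n+1} − 2) has length b_1 b_2 ⋯ b_n = ((3/2)L − Σ_{i=0}^{n−1} a_i)/(2^n · (3/2)L), and the limit set F has Lebesgue measure equal to 1/3. -/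
/-!
Put `c n = (3/2)L − ∑_{i<n} a_i`, so that `b_n = c_n / (2 c_{n-1})`. The product `b_1⋯b_n`
telescopes to `c_n / (2^n c_0)`, and `0 < b_n < 1/2` because `c` decreases and stays above
`L/2 > 0`. Each interval then has its two children at its ends with a gap in between, so the
`2^n` intervals of generation `n` are disjoint, all of length `b_1⋯b_n`, and each generation
lies inside the previous one. By continuity of measure from above,
`vol F = lim c_n / c_0 = (L/2) / ((3/2)L) = 1/3`.
-/

open Finset MeasureTheory Filter Topology

def generation (n : ℕ) : Finset ℕ := Icc (2 ^ n - 1) (2 ^ (n + 1) - 2)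

theorem mem_generation {n ℓ : ℕ} : ℓ ∈ generation n ↔ 2 ^ n - 1 ≤ ℓ ∧ ℓ ≤ 2 ^ (n + 1) - 2 :=
  mem_Icc

theorem generation_zero : generation 0 = {0} := rfl

theorem card_generation (n : ℕ) : #(generation n) = 2 ^ n := by
  have := Nat.one_le_two_pow (n := n)
  rw [generation, Nat.card_Icc, pow_succ]
  omega

theorem exists_mem_generation (ℓ : ℕ) : ∃ n, ℓ ∈ generation n := by
  refine ⟨Nat.log 2 (ℓ + 1), mem_generation.2 ⟨?_, ?_⟩⟩
  · have := Nat.pow_log_le_self 2 (Nat.add_one_ne_zero ℓ)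
    omega
  · have := Nat.lt_pow_succ_log_self Nat.one_lt_two (ℓ + 1)
    omega

theorem exists_parent_of_mem_generation_succ {n ℓ : ℕ} (hℓ : ℓ ∈ generation (n + 1)) :
    ∃ m ∈ generation n, ℓ = 2 * m + 1 ∨ ℓ = 2 * m + 2 := by
  rw [mem_generation, pow_succ, pow_succ] at hℓ
  have := Nat.one_le_two_pow (n := n)
  exact ⟨(ℓ - 1) / 2, mem_generation.2 (by rw [pow_succ]; omega), by omega⟩

def level (a b : ℕ → ℝ) (n : ℕ) : Set ℝ := ⋃ ℓ ∈ generation n, Set.Icc (a ℓ) (b ℓ)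

theorem measurableSet_level (a b : ℕ → ℝ) (n : ℕ) : MeasurableSet (level a b n) :=
  (generation n).measurableSet_biUnion fun _ _ => measurableSet_Icc

theorem volume_level {a b : ℕ → ℝ} {n : ℕ} {s : ℝ}
    (hsorted : ∀ ℓ ∈ generation n, ∀ ℓ' ∈ generation n, ℓ < ℓ' → b ℓ < a ℓ')
    (hlen : ∀ ℓ ∈ generation n, b ℓ - a ℓ = s) :
    volume (level a b n) = ENNReal.ofReal (2 ^ n * s) := by
  have hdisj_of_lt : ∀ ℓ ∈ generation n, ∀ ℓ' ∈ generation n, ℓ < ℓ' →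
      Disjoint (Set.Icc (a ℓ) (b ℓ)) (Set.Icc (a ℓ') (b ℓ')) := fun ℓ hℓ ℓ' hℓ' hlt =>
    Set.disjoint_left.2 fun _ hx hx' => (hsorted ℓ hℓ ℓ' hℓ' hlt).not_ge (hx'.1.trans hx.2)
  have hdisj : (generation n : Set ℕ).PairwiseDisjoint fun ℓ => Set.Icc (a ℓ) (b ℓ) := by
    intro ℓ hℓ ℓ' hℓ' hne
    rcases hne.lt_or_gt with hlt | hlt
    · exact hdisj_of_lt ℓ hℓ ℓ' hℓ' hlt
    · exact (hdisj_of_lt ℓ' hℓ' ℓ hℓ hlt).symm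
  rw [level, measure_biUnion_finset hdisj fun _ _ => measurableSet_Icc,
    sum_congr rfl fun ℓ hℓ => by rw [Real.volume_Icc, hlen ℓ hℓ], sum_const, card_generation,
    ← ENNReal.ofReal_nsmul, nsmul_eq_mul]
  push_cast
  rfl

theorem volume_iInter_level_of_tendsto {a b : ℕ → ℝ} (hanti : ∀ n, level a b (n + 1) ⊆ level a b n)
    {f : ℕ → ℝ} (hvol : ∀ n, volume (level a b n) = ENNReal.ofReal (f n)) {x : ℝ}
    (hf : Tendsto f atTop (𝓝 x)) :
    volume (⋂ n ≥ 1, level a b n) = ENNReal.ofReal x := by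
  rw [Set.iInter_ge_eq_iInter_nat_add]
  have hlim := tendsto_measure_iInter_atTop (μ := volume)
    (fun n => (measurableSet_level a b (n + 1)).nullMeasurableSet)
    (antitone_nat_of_succ_le fun n => hanti (n + 1))
    ⟨0, by rw [hvol]; exact ENNReal.ofReal_ne_top⟩
  refine tendsto_nhds_unique hlim ?_
  simp only [Function.comp_def, hvol]
  exact (ENNReal.continuous_ofReal.tendsto x).comp (hf.comp (tendsto_add_atTop_nat 1))

/-- `Set.Icc (a ℓ) (b ℓ)` is the interval `E_ℓ` of the construction driven by
`k_ℓ = (k₁ ℓ, k₂ ℓ)`. -/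
structure IsCantorScheme (k₁ k₂ a b : ℕ → ℝ) : Prop where
  left_lower : ∀ ℓ, a (2 * ℓ + 1) = a ℓ
  left_upper : ∀ ℓ, b (2 * ℓ + 1) = a ℓ + k₁ ℓ * (b ℓ - a ℓ)
  right_lower : ∀ ℓ, a (2 * ℓ + 2) = b ℓ - k₂ ℓ * (b ℓ - a ℓ)
  right_upper : ∀ ℓ, b (2 * ℓ + 2) = b ℓ

namespace IsCantorScheme

variable {k₁ k₂ a b : ℕ → ℝ}

theorem nested (h : IsCantorScheme k₁ k₂ a b) {m ℓ : ℕ} (hk₁ : k₁ m ≤ 1) (hk₂ : k₂ m ≤ 1)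
    (hab : a m ≤ b m) (hℓ : ℓ = 2 * m + 1 ∨ ℓ = 2 * m + 2) : a m ≤ a ℓ ∧ b ℓ ≤ b m := by
  rcases hℓ with rfl | rfl
  · rw [h.left_lower, h.left_upper]
    exact ⟨le_rfl, by nlinarith⟩
  · rw [h.right_lower, h.right_upper]
    exact ⟨by nlinarith, le_rfl⟩

theorem left_upper_lt_right_lower (h : IsCantorScheme k₁ k₂ a b) {m : ℕ}
    (hk : k₁ m + k₂ m < 1) (hab : a m < b m) : b (2 * m + 1) < a (2 * m + 2) := by
  rw [h.left_upper, h.right_lower]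
  nlinarith

theorem length_eq_mul_prod (h : IsCantorScheme k₁ k₂ a b) {r : ℕ → ℝ}
    (hr : ∀ n, ∀ m ∈ generation n, k₁ m = r (n + 1) ∧ k₂ m = r (n + 1)) (n : ℕ) :
    ∀ ℓ ∈ generation n, b ℓ - a ℓ = (b 0 - a 0) * ∏ i ∈ Icc 1 n, r i := by
  induction n with
  | zero => simp [generation_zero]
  | succ n ih =>
    intro ℓ hℓ
    obtain ⟨m, hm, rfl | rfl⟩ := exists_parent_of_mem_generation_succ hℓ
    · rw [h.left_lower, h.left_upper, prod_Icc_succ_top (by omega), ← (hr n m hm).1]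
      linear_combination k₁ m * ih m hm
    · rw [h.right_lower, h.right_upper, prod_Icc_succ_top (by omega), ← (hr n m hm).2]
      linear_combination k₂ m * ih m hm

theorem upper_lt_lower_of_mem_generation (h : IsCantorScheme k₁ k₂ a b)
    (hk : ∀ m, 0 ≤ k₁ m ∧ 0 ≤ k₂ m ∧ k₁ m + k₂ m < 1) (hab : ∀ m, a m < b m) (n : ℕ) :
    ∀ ℓ ∈ generation n, ∀ ℓ' ∈ generation n, ℓ < ℓ' → b ℓ < a ℓ' := by
  induction n with
  | zero => simp [generation_zero]
  | succ n ih =>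
    intro ℓ hℓ ℓ' hℓ' hlt
    obtain ⟨m, hm, hℓm⟩ := exists_parent_of_mem_generation_succ hℓ
    obtain ⟨m', hm', hℓm'⟩ := exists_parent_of_mem_generation_succ hℓ'
    have hnested : ∀ {m ℓ}, (ℓ = 2 * m + 1 ∨ ℓ = 2 * m + 2) → a m ≤ a ℓ ∧ b ℓ ≤ b m :=
      fun {m _} => h.nested (by linarith [hk m]) (by linarith [hk m]) (hab m).le
    rcases (show m ≤ m' by omega).lt_or_eq with hmm | rfl
    · calc b ℓ ≤ b m := (hnested hℓm).2
        _ < a m' := ih m hm m' hm' hmm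
        _ ≤ a ℓ' := (hnested hℓm').1
    · obtain ⟨rfl, rfl⟩ : ℓ = 2 * m + 1 ∧ ℓ' = 2 * m + 2 := by omega
      exact h.left_upper_lt_right_lower (hk m).2.2 (hab m)

theorem level_succ_subset (h : IsCantorScheme k₁ k₂ a b) (hk₁ : ∀ m, k₁ m ≤ 1)
    (hk₂ : ∀ m, k₂ m ≤ 1) (hab : ∀ m, a m ≤ b m) (n : ℕ) : level a b (n + 1) ⊆ level a b n := by
  intro x hx
  simp only [level, Set.mem_iUnion₂, exists_prop] at hx ⊢
  obtain ⟨ℓ, hℓ, hxℓ⟩ := hx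
  obtain ⟨m, hm, hℓm⟩ := exists_parent_of_mem_generation_succ hℓ
  obtain ⟨hlower, hupper⟩ := h.nested (hk₁ m) (hk₂ m) (hab m) hℓm
  exact ⟨m, hm, hlower.trans hxℓ.1, hxℓ.2.trans hupper⟩

theorem volume_iInter_level (h : IsCantorScheme k₁ k₂ a b) {r : ℕ → ℝ}
    (hr : ∀ n, ∀ m ∈ generation n, k₁ m = r (n + 1) ∧ k₂ m = r (n + 1))
    (hr_pos : ∀ n, 0 < r (n + 1)) (hr_lt : ∀ n, r (n + 1) < 1 / 2) (hab₀ : a 0 < b 0) {x : ℝ}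
    (hx : Tendsto (fun n => 2 ^ n * ∏ i ∈ Icc 1 n, r i) atTop (𝓝 x)) :
    volume (⋂ n ≥ 1, level a b n) = ENNReal.ofReal ((b 0 - a 0) * x) := by
  have hprod_pos (n : ℕ) : 0 < ∏ i ∈ Icc 1 n, r i := prod_pos fun i hi => by
    obtain ⟨j, rfl⟩ := Nat.exists_eq_add_one.2 (mem_Icc.1 hi).1
    exact hr_pos j
  have hk (m : ℕ) : 0 ≤ k₁ m ∧ 0 ≤ k₂ m ∧ k₁ m + k₂ m < 1 := by
    obtain ⟨n, hn⟩ := exists_mem_generation m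
    rw [(hr n m hn).1, (hr n m hn).2]
    exact ⟨(hr_pos n).le, (hr_pos n).le, by linarith [hr_lt n]⟩
  have hab (m : ℕ) : a m < b m := by
    obtain ⟨n, hn⟩ := exists_mem_generation m
    have := h.length_eq_mul_prod hr n m hn
    nlinarith [hprod_pos n]
  refine volume_iInter_level_of_tendsto
    (h.level_succ_subset (fun m => by linarith [hk m]) (fun m => by linarith [hk m])
      fun m => (hab m).le)
    (fun n => volume_level (h.upper_lt_lower_of_mem_generation hk hab n)
      (h.length_eq_mul_prod hr n)) ?_
  simpa only [mul_left_comm] using hx.const_mul (b 0 - a 0)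

end IsCantorScheme

theorem sum_range_lt_of_hasSum {f : ℕ → ℝ} {L : ℝ} (hf : ∀ n, 0 < f n) (h : HasSum f L)
    (n : ℕ) : ∑ i ∈ range n, f i < L :=
  calc ∑ i ∈ range n, f i < ∑ i ∈ range (n + 1), f i := by
        rw [sum_range_succ]
        linarith [hf n]
    _ ≤ L := sum_le_hasSum _ (fun i _ => (hf i).le) h

noncomputable def halfRatio (c : ℕ → ℝ) (n : ℕ) : ℝ := c n / (2 * c (n - 1))

section halfRatio

variable {c : ℕ → ℝ}

theorem prod_halfRatio (hc : ∀ n, c n ≠ 0) (n : ℕ) :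
    ∏ i ∈ Icc 1 n, halfRatio c i = c n / (2 ^ n * c 0) := by
  induction n with
  | zero => simp [hc 0]
  | succ n ih =>
    rw [prod_Icc_succ_top (by omega), ih, halfRatio, Nat.add_sub_cancel]
    field_simp [hc n]
    ring

theorem halfRatio_succ_pos (hc : ∀ n, 0 < c n) (n : ℕ) : 0 < halfRatio c (n + 1) := by
  rw [halfRatio, Nat.add_sub_cancel]
  exact div_pos (hc _) (by linarith [hc n])

theorem halfRatio_succ_lt_half (hc : ∀ n, 0 < c n) (hanti : StrictAnti c) (n : ℕ) :
    halfRatio c (n + 1) < 1 / 2 := by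
  rw [halfRatio, Nat.add_sub_cancel, div_lt_iff₀ (by linarith [hc n])]
  linarith [hanti n.lt_succ_self]

theorem tendsto_two_pow_mul_prod_halfRatio (hc : ∀ n, c n ≠ 0) {l : ℝ}
    (hl : Tendsto c atTop (𝓝 l)) :
    Tendsto (fun n => 2 ^ n * ∏ i ∈ Icc 1 n, halfRatio c i) atTop (𝓝 (l / c 0)) := by
  refine (hl.div_const (c 0)).congr fun n => ?_
  rw [prod_halfRatio hc]
  field_simp

end halfRatio

/-- Example 5.3: given a convergent series `∑ a_n = L` of positive terms, driving the
Cantor-type construction by `k_ℓ = (b_n, b_n)` on the `n`-th generation (where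
`b_n = ((3/2)L − ∑_{i<n} a_i) / (2((3/2)L − ∑_{i<n−1} a_i))`) yields intervals of the
`n`-th generation of length `b_1⋯b_n = ((3/2)L − ∑_{i<n} a_i)/(2^n (3/2)L)`, and the
limit set has Lebesgue measure `1/3`. -/
theorem stmt_17
    (aa : ℕ → ℝ) (haa : ∀ n : ℕ, 0 < aa n) (L : ℝ) (hL : HasSum aa L)
    (bb : ℕ → ℝ)
    (hbb : ∀ n : ℕ, 1 ≤ n → bb n =
      (3 / 2 * L - ∑ i ∈ Finset.range n, aa i) /
        (2 * (3 / 2 * L - ∑ i ∈ Finset.range (n - 1), aa i)))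
    (k1 k2 : ℕ → ℝ)
    (hk : ∀ n : ℕ, 1 ≤ n → ∀ ℓ : ℕ, 2 ^ (n - 1) - 1 ≤ ℓ → ℓ ≤ 2 ^ n - 2 →
      k1 ℓ = bb n ∧ k2 ℓ = bb n)
    (a b : ℕ → ℝ)
    (ha0 : a 0 = 0) (hb0 : b 0 = 1)
    (haL : ∀ ℓ : ℕ, a (2 * ℓ + 1) = a ℓ)
    (hbL : ∀ ℓ : ℕ, b (2 * ℓ + 1) = a ℓ + k1 ℓ * (b ℓ - a ℓ))
    (haR : ∀ ℓ : ℕ, a (2 * ℓ + 2) = b ℓ - k2 ℓ * (b ℓ - a ℓ))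
    (hbR : ∀ ℓ : ℕ, b (2 * ℓ + 2) = b ℓ)
    (F : Set ℝ)
    (hF : F = ⋂ (n : ℕ) (_ : 1 ≤ n),
      ⋃ ℓ ∈ Finset.Icc (2 ^ n - 1) (2 ^ (n + 1) - 2), Set.Icc (a ℓ) (b ℓ)) :
    (∀ n : ℕ, 1 ≤ n → ∀ ℓ : ℕ, 2 ^ n - 1 ≤ ℓ → ℓ ≤ 2 ^ (n + 1) - 2 →
      b ℓ - a ℓ = ∏ i ∈ Finset.Icc 1 n, bb i ∧
      ∏ i ∈ Finset.Icc 1 n, bb i =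
        (3 / 2 * L - ∑ i ∈ Finset.range n, aa i) / (2 ^ n * (3 / 2 * L))) ∧
    MeasureTheory.volume F = ENNReal.ofReal (1 / 3) := by
  have hsum_lt := sum_range_lt_of_hasSum haa hL
  have hL_pos : 0 < L := by simpa using hsum_lt 0
  set c : ℕ → ℝ := fun n => 3 / 2 * L - ∑ i ∈ range n, aa i
  have hc_pos (n : ℕ) : 0 < c n := by
    simp only [c]
    linarith [hsum_lt n]
  have hc_anti : StrictAnti c := strictAnti_nat_of_succ_lt fun n => by
    simp only [c, sum_range_succ]
    linarith [haa n]
  have hc_lim : Tendsto c atTop (𝓝 (3 / 2 * L - L)) :=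
    tendsto_const_nhds.sub hL.tendsto_sum_nat
  have hbb_eq (n : ℕ) (hn : 1 ≤ n) : bb n = halfRatio c n := hbb n hn
  have hprod (n : ℕ) : ∏ i ∈ Icc 1 n, bb i = ∏ i ∈ Icc 1 n, halfRatio c i :=
    prod_congr rfl fun i hi => hbb_eq i (mem_Icc.1 hi).1
  have hk_gen (n : ℕ) :
      ∀ m ∈ generation n, k1 m = halfRatio c (n + 1) ∧ k2 m = halfRatio c (n + 1) := by
    intro m hm
    rw [← hbb_eq (n + 1) n.succ_pos]
    exact hk (n + 1) n.succ_pos m (by simpa using (mem_generation.1 hm).1) (mem_generation.1 hm).2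
  have hscheme : IsCantorScheme k1 k2 a b := ⟨haL, hbL, haR, hbR⟩
  refine ⟨fun n _ ℓ h₁ h₂ => ⟨?_, ?_⟩, ?_⟩
  · simpa [ha0, hb0, hprod] using hscheme.length_eq_mul_prod hk_gen n ℓ (mem_generation.2 ⟨h₁, h₂⟩)
  · simp [hprod, prod_halfRatio fun n => (hc_pos n).ne', c]
  · have hvol := hscheme.volume_iInter_level hk_gen (halfRatio_succ_pos hc_pos)
      (halfRatio_succ_lt_half hc_pos hc_anti) (by simp [ha0, hb0])
      (tendsto_two_pow_mul_prod_halfRatio (fun n => (hc_pos n).ne') hc_lim)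
    have hthird : (b 0 - a 0) * ((3 / 2 * L - L) / c 0) = 1 / 3 := by
      simp only [ha0, hb0, c, range_zero, sum_empty]
      field_simp
      ring
    rw [hF, ← hthird]
    exact hvol
end
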